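/- arXiv:2404.02550 — 11 statements merged into one kernel-verified Lean document; each statement's English description precedes it below -/
import Mathlib

section
/- Let n ≥ 1, let k_B > 0, let (b_{αβ})_{α,β=1}^n be a symmetric matrix with all entries b_{αβ} > 0, let m_1,…,m_n and T_1,…,T_n be positive real numbers, and let u_1,…,u_n ∈ ℝ^3. Define Σ := ∑_{α,β=1}^n b_{αβ} [ −(u_α/T_α) · ((m_α + m_β)(u_β − u_α)) + (1/T_α)( 3 k_B (T_β − T_α) + (m_α u_α + m_β u_β) · (u_β − u_α) ) ]. Then Σ = ∑_{α,β=1}^n (b_{αβ}/(2 T_α T_β)) [ (m_α T_α + m_β T_β) ‖u_β − u_α‖² + 3 k_B (T_β − T_α)² ], so that Σ ≥ 0; moreover Σ = 0 if and only if u_α = u_β and T_α = T_β for all α, β ∈ {1,…,n}. -/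
/-!
After the inner products are expanded, the `(α, β)` summand of the entropy production is
`b α β / T α * (3 kB (T β - T α) + m β ‖u β - u α‖²)`. This is not sign-definite, but since `b` is
symmetric the double sum is unchanged when each summand is replaced by the mean of it and its
transpose, and that mean is the manifestly nonnegative quadratic form
`b α β / (2 T α T β) * ((m α T α + m β T β) ‖u β - u α‖² + 3 kB (T β - T α)²)`, which vanishes
exactly when `u α = u β` and `T α = T β`.
-/

open Finset

theorem Fintype.sum_sum_eq_of_add_swap_eq_two_mul {ι R : Type*} [Fintype ι] [CommRing R]
    [IsDomain R] [CharZero R] (f g : ι → ι → R) (h : ∀ i j, f i j + f j i = 2 * g i j) :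
    ∑ i, ∑ j, f i j = ∑ i, ∑ j, g i j := by
  refine mul_left_cancel₀ (two_ne_zero' R) ?_
  calc 2 * ∑ i, ∑ j, f i j = ∑ i, ∑ j, f i j + ∑ i, ∑ j, f j i := by
        rw [two_mul, Finset.sum_comm (f := fun j i => f i j)]
    _ = ∑ i, ∑ j, 2 * g i j := by simp only [← sum_add_distrib, h]
    _ = 2 * ∑ i, ∑ j, g i j := by simp only [mul_sum]

theorem Fintype.sum_sum_eq_zero_iff_of_nonneg {ι R : Type*} [Fintype ι]
    [AddCommMonoid R] [PartialOrder R] [IsOrderedAddMonoid R] {f : ι → ι → R}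
    (hf : ∀ i j, 0 ≤ f i j) : ∑ i, ∑ j, f i j = 0 ↔ ∀ i j, f i j = 0 := by
  rw [Finset.sum_eq_zero_iff_of_nonneg fun i _ => Finset.sum_nonneg fun j _ => hf i j]
  simp only [mem_univ, forall_const, Finset.sum_eq_zero_iff_of_nonneg fun j _ => hf _ j]

section EntropyProduction

variable {ι E : Type*} [NormedAddCommGroup E]

theorem inner_exchange_eq_norm_sq [InnerProductSpace ℝ E] (t a c e : ℝ) (x y : E) :
    -(inner ℝ (t⁻¹ • x) ((a + c) • (y - x)) : ℝ) + t⁻¹ * (e + inner ℝ (a • x + c • y) (y - x)) =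
      t⁻¹ * (e + c * ‖y - x‖ ^ 2) := by
  rw [← real_inner_self_eq_norm_sq]
  simp only [real_inner_smul_left, real_inner_smul_right, inner_add_left, inner_sub_left]
  ring

noncomputable def entropyProductionPair (kB : ℝ) (b : ι → ι → ℝ) (m T : ι → ℝ) (u : ι → E)
    (α β : ι) : ℝ :=
  b α β / (2 * T α * T β) *
    ((m α * T α + m β * T β) * ‖u β - u α‖ ^ 2 + 3 * kB * (T β - T α) ^ 2)

variable {kB : ℝ} {b : ι → ι → ℝ} {m T : ι → ℝ} {u : ι → E}

theorem add_swap_eq_two_mul_entropyProductionPair (hb : ∀ α β, b α β = b β α)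
    (hT : ∀ α, T α ≠ 0) (α β : ι) :
    b α β * ((T α)⁻¹ * (3 * kB * (T β - T α) + m β * ‖u β - u α‖ ^ 2)) +
        b β α * ((T β)⁻¹ * (3 * kB * (T α - T β) + m α * ‖u α - u β‖ ^ 2)) =
      2 * entropyProductionPair kB b m T u α β := by
  have hTα := hT α
  have hTβ := hT β
  rw [entropyProductionPair, hb β α, norm_sub_rev (u α)]
  field_simp
  ring

theorem entropyProductionPair_nonneg (hkB : 0 ≤ kB) (hb : ∀ α β, 0 ≤ b α β)
    (hm : ∀ α, 0 ≤ m α) (hT : ∀ α, 0 < T α) (α β : ι) :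
    0 ≤ entropyProductionPair kB b m T u α β := by
  have := hb α β; have := hm α; have := hm β; have := hT α; have := hT β
  unfold entropyProductionPair
  positivity

theorem entropyProductionPair_eq_zero_iff (hkB : 0 < kB) (hb : ∀ α β, 0 < b α β)
    (hm : ∀ α, 0 < m α) (hT : ∀ α, 0 < T α) (α β : ι) :
    entropyProductionPair kB b m T u α β = 0 ↔ u α = u β ∧ T α = T β := by
  have := hb α β; have := hm α; have := hm β; have := hT α; have := hT β
  have hcoef : 0 < b α β / (2 * T α * T β) := by positivity
  have hmT : 0 < m α * T α + m β * T β := by positivity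
  rw [entropyProductionPair, mul_eq_zero, or_iff_right hcoef.ne',
    add_eq_zero_iff_of_nonneg (by positivity) (by positivity),
    mul_eq_zero, or_iff_right hmT.ne', mul_eq_zero, or_iff_right (by positivity),
    sq_eq_zero_iff, sq_eq_zero_iff, norm_eq_zero, sub_eq_zero, sub_eq_zero, eq_comm (a := u β),
    eq_comm (a := T β)]

end EntropyProduction

theorem stmt2_general (n : ℕ) (kB : ℝ) (hkB : 0 < kB)
    (b : Fin n → Fin n → ℝ) (hb_symm : ∀ α β, b α β = b β α) (hb_pos : ∀ α β, 0 < b α β)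
    (m T : Fin n → ℝ) (hm : ∀ α, 0 < m α) (hT : ∀ α, 0 < T α)
    (u : Fin n → EuclideanSpace ℝ (Fin 3))
    (S : ℝ)
    (hS : S = ∑ α, ∑ β, b α β *
      (-(inner ℝ ((T α)⁻¹ • u α) ((m α + m β) • (u β - u α)) : ℝ) +
        (T α)⁻¹ * (3 * kB * (T β - T α) +
          (inner ℝ (m α • u α + m β • u β) (u β - u α) : ℝ)))) :
    S = ∑ α, ∑ β, b α β / (2 * T α * T β) *
          ((m α * T α + m β * T β) * ‖u β - u α‖ ^ 2 + 3 * kB * (T β - T α) ^ 2) ∧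
      0 ≤ S ∧
      (S = 0 ↔ ∀ α β, u α = u β ∧ T α = T β) := by
  have hS_pair : S = ∑ α, ∑ β, entropyProductionPair kB b m T u α β := by
    simp only [hS, inner_exchange_eq_norm_sq]
    exact Fintype.sum_sum_eq_of_add_swap_eq_two_mul _ _
      (add_swap_eq_two_mul_entropyProductionPair hb_symm fun α => (hT α).ne')
  have hpair_nonneg := entropyProductionPair_nonneg (u := u) hkB.le (fun α β => (hb_pos α β).le)
    (fun α => (hm α).le) hT
  refine ⟨hS_pair, hS_pair ▸ sum_nonneg fun α _ => sum_nonneg fun β _ => hpair_nonneg α β, ?_⟩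
  rw [hS_pair, Fintype.sum_sum_eq_zero_iff_of_nonneg hpair_nonneg]
  simp only [entropyProductionPair_eq_zero_iff hkB hb_pos hm hT]

theorem stmt2 (n : ℕ) (hn : 1 ≤ n) (kB : ℝ) (hkB : 0 < kB)
    (b : Fin n → Fin n → ℝ) (hb_symm : ∀ α β, b α β = b β α) (hb_pos : ∀ α β, 0 < b α β)
    (m T : Fin n → ℝ) (hm : ∀ α, 0 < m α) (hT : ∀ α, 0 < T α)
    (u : Fin n → EuclideanSpace ℝ (Fin 3))
    (S : ℝ)
    (hS : S = ∑ α, ∑ β, b α β *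
      (-(inner ℝ ((T α)⁻¹ • u α) ((m α + m β) • (u β - u α)) : ℝ) +
        (T α)⁻¹ * (3 * kB * (T β - T α) +
          (inner ℝ (m α • u α + m β • u β) (u β - u α) : ℝ)))) :
    S = ∑ α, ∑ β, b α β / (2 * T α * T β) *
          ((m α * T α + m β * T β) * ‖u β - u α‖ ^ 2 + 3 * kB * (T β - T α) ^ 2) ∧
      0 ≤ S ∧
      (S = 0 ↔ ∀ α β, u α = u β ∧ T α = T β) :=
  stmt2_general n kB hkB b hb_symm hb_pos m T hm hT u S hS
end

section
/- Let n ≥ 1, let (a_{αβ})_{α,β=1}^n be a constant symmetric matrix with min_{α,β} a_{αβ} = a̲ > 0, and let (x_α, u_α, T_α) be a differentiable solution on [0,∞) of the KB-CS model whose initial data satisfy ∑_α x_α(0) = 0, ∑_α u_α(0) = 0, and (1/n)∑_α (T_α(0) + ½‖u_α(0)‖²) = T₀. Then for all t ≥ 0: 𝒱(t) ≤ 𝒱(0) e^{−a̲ t}, 𝒳(t) ≤ 𝒳(0) + 𝒱(0)/a̲, and ℰ(t) ≤ ℰ(0) e^{−a̲ t}. -/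
/-!
Velocities and the total energies `T_α + ½‖u_α‖² - T₀` both solve the linear consensus system
`f_α' = ∑_β b_{αβ} (f_β - f_α)` with `b = a / n` symmetric and `b ≥ a̲ / n`. By symmetry such a
flow conserves `∑_α f_α`, which is `0` initially, and
`½ d/dt ∑_α ‖f_α‖² = -½ ∑_{α,β} b_{αβ} ‖f_β - f_α‖² ≤ -(a̲ / 2n) ∑_{α,β} ‖f_β - f_α‖²
  = -a̲ ∑_α ‖f_α‖²`,
the last equality because the mean vanishes. Grönwall gives the two exponential decays, and
integrating `‖x'‖ = 𝒱 ≤ 𝒱(0) e^{-a̲ t}` bounds 𝒳.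
-/

open Finset Real
open scoped RealInnerProductSpace

theorem le_mul_exp_of_hasDerivAt_le_mul {W W' : ℝ → ℝ} {c : ℝ}
    (hW : ∀ t ≥ 0, HasDerivAt W (W' t) t) (hbound : ∀ t ≥ 0, W' t ≤ c * W t) :
    ∀ t ≥ 0, W t ≤ W 0 * exp (c * t) := by
  intro t ht
  have h := le_gronwallBound_of_liminf_deriv_right_le (ε := 0) (a := 0) (b := t)
    (fun s hs => (hW s hs.1).continuousAt.continuousWithinAt)
    (fun s hs r hr => by
      simpa [slope_def_field, div_eq_inv_mul] using
        (hW s hs.1).hasDerivWithinAt.liminf_right_slope_le hr)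
    le_rfl (fun s hs => by simpa using hbound s hs.1) t ⟨ht, le_rfl⟩
  simpa [gronwallBound_ε0] using h

theorem norm_le_add_div_of_norm_deriv_le_mul_exp {F : Type*} [NormedAddCommGroup F]
    [NormedSpace ℝ F] {Y Y' : ℝ → F} {C c : ℝ} (hc : 0 < c)
    (hY : ∀ t ≥ 0, HasDerivAt Y (Y' t) t) (hbound : ∀ t ≥ 0, ‖Y' t‖ ≤ C * exp (-c * t)) :
    ∀ t ≥ 0, ‖Y t‖ ≤ ‖Y 0‖ + C / c := by
  intro t ht
  have hC : 0 ≤ C := by simpa using (norm_nonneg _).trans (hbound 0 le_rfl)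
  set B : ℝ → ℝ := fun s => ‖Y 0‖ + C / c * (1 - exp (-c * s))
  have hB : ∀ s, HasDerivAt B (C * exp (-c * s)) s := fun s => by
    have h := ((((hasDerivAt_id s).const_mul (-c)).exp.const_sub 1).const_mul (C / c)).const_add
      ‖Y 0‖
    refine h.congr_deriv ?_
    simp only [id]
    field_simp
  have hYt := image_norm_le_of_norm_deriv_right_le_deriv_boundary (B := B)
    (fun s hs => (hY s hs.1).continuousAt.continuousWithinAt)
    (fun s hs => (hY s hs.1).hasDerivWithinAt) (by simp [B]) hB
    (fun s hs => hbound s hs.1) ⟨ht, le_rfl⟩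
  have : C / c * (1 - exp (-c * t)) ≤ C / c :=
    mul_le_of_le_one_right (div_nonneg hC hc.le) (by linarith [exp_pos (-c * t)])
  simp only [B] at hYt
  linarith

theorem sum_sum_smul_sub_eq_zero {ι R M : Type*} [Fintype ι] [Ring R] [AddCommGroup M]
    [Module R M] {a : ι → ι → R} (ha : ∀ α β, a α β = a β α) (g : ι → M) :
    ∑ α, ∑ β, a α β • (g β - g α) = 0 := by
  simp only [smul_sub, sum_sub_distrib, sub_eq_zero]
  rw [sum_comm]
  simp only [ha]

section Consensus

variable {ι E : Type*} [Fintype ι] [NormedAddCommGroup E] [InnerProductSpace ℝ E]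
  {a : ι → ι → ℝ}

theorem sum_sum_mul_inner_sub_eq (ha : ∀ α β, a α β = a β α) (g : ι → E) :
    ∑ α, ∑ β, a α β * ⟪g α, g β - g α⟫ = -(∑ α, ∑ β, a α β * ‖g β - g α‖ ^ 2) / 2 := by
  have hswap : ∑ α, ∑ β, a α β * ⟪g α, g β - g α⟫ = ∑ α, ∑ β, a α β * ⟪g β, g α - g β⟫ := by
    rw [sum_comm]
    simp only [ha]
  have hpair : ∀ α β, ⟪g α, g β - g α⟫ + ⟪g β, g α - g β⟫ = -‖g β - g α‖ ^ 2 := fun α β => by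
    rw [inner_sub_right, inner_sub_right, norm_sub_sq_real, real_inner_self_eq_norm_sq,
      real_inner_self_eq_norm_sq, real_inner_comm (g β) (g α)]
    ring
  have h2 : 2 * ∑ α, ∑ β, a α β * ⟪g α, g β - g α⟫ = -∑ α, ∑ β, a α β * ‖g β - g α‖ ^ 2 := by
    rw [two_mul]
    nth_rw 2 [hswap]
    simp only [← sum_add_distrib, ← mul_add, hpair, mul_neg, sum_neg_distrib]
  linarith

theorem sum_sum_norm_sub_sq_eq (g : ι → E) (hg : ∑ α, g α = 0) :
    ∑ α, ∑ β, ‖g β - g α‖ ^ 2 = 2 * Fintype.card ι * ∑ α, ‖g α‖ ^ 2 := by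
  have hcross : ∑ α, ∑ β, ⟪g β, g α⟫ = 0 := by
    simp only [← sum_inner, hg, inner_zero_left, sum_const_zero]
  simp only [norm_sub_sq_real, sum_add_distrib, sum_sub_distrib, ← mul_sum, hcross, sum_const,
    card_univ, nsmul_eq_mul]
  ring

theorem sum_inner_sum_smul_sub_le {m : ℝ} (ha : ∀ α β, a α β = a β α) (hm : ∀ α β, m ≤ a α β)
    (g : ι → E) (hg : ∑ α, g α = 0) :
    ∑ α, ⟪g α, ∑ β, a α β • (g β - g α)⟫ ≤ -(m * Fintype.card ι) * ∑ α, ‖g α‖ ^ 2 := by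
  have hlow : m * ∑ α, ∑ β, ‖g β - g α‖ ^ 2 ≤ ∑ α, ∑ β, a α β * ‖g β - g α‖ ^ 2 := by
    simp only [mul_sum]
    gcongr with α _ β _
    exact hm α β
  simp only [inner_sum, real_inner_smul_right]
  rw [sum_sum_mul_inner_sub_eq ha]
  rw [sum_sum_norm_sub_sq_eq g hg] at hlow
  linarith

def SolvesLinearConsensus (a : ι → ι → ℝ) (f : ι → ℝ → E) : Prop :=
  ∀ α, ∀ t ≥ (0 : ℝ), HasDerivAt (f α) (∑ β, a α β • (f β t - f α t)) t

namespace SolvesLinearConsensus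

variable {f : ι → ℝ → E}

theorem sum_eq_zero (hf : SolvesLinearConsensus a f) (ha : ∀ α β, a α β = a β α)
    (h0 : ∑ α, f α 0 = 0) : ∀ t ≥ (0 : ℝ), ∑ α, f α t = 0 := by
  have hderiv : ∀ t ≥ (0 : ℝ), HasDerivAt (fun s => ∑ α, f α s) 0 t := fun t ht => by
    simpa [sum_sum_smul_sub_eq_zero ha] using HasDerivAt.fun_sum (u := univ) fun α _ => hf α t ht
  intro t ht
  rw [← h0]
  exact constant_of_has_deriv_right_zero
    (fun s hs => (hderiv s hs.1).continuousAt.continuousWithinAt) (fun s hs => (hderiv s hs.1).hasDerivWithinAt) t ⟨ht, le_rfl⟩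

theorem sum_norm_sq_le {m : ℝ} (hf : SolvesLinearConsensus a f) (ha : ∀ α β, a α β = a β α)
    (hm : ∀ α β, m ≤ a α β) (h0 : ∑ α, f α 0 = 0) :
    ∀ t ≥ (0 : ℝ), ∑ α, ‖f α t‖ ^ 2 ≤
      (∑ α, ‖f α 0‖ ^ 2) * exp (-(2 * (m * Fintype.card ι)) * t) := by
  refine le_mul_exp_of_hasDerivAt_le_mul (fun t ht => HasDerivAt.fun_sum fun α _ =>
    (hf α t ht).norm_sq) fun t ht => ?_
  have := sum_inner_sum_smul_sub_le ha hm (fun α => f α t) (hf.sum_eq_zero ha h0 t ht)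
  rw [← mul_sum]
  linarith

theorem sqrt_sum_norm_sq_le {m : ℝ} (hf : SolvesLinearConsensus a f)
    (ha : ∀ α β, a α β = a β α) (hm : ∀ α β, m ≤ a α β) (h0 : ∑ α, f α 0 = 0) :
    ∀ t ≥ (0 : ℝ), √(∑ α, ‖f α t‖ ^ 2) ≤
      √(∑ α, ‖f α 0‖ ^ 2) * exp (-(m * Fintype.card ι) * t) := by
  intro t ht
  have hexp : exp (-(2 * (m * Fintype.card ι)) * t) = exp (-(m * Fintype.card ι) * t) ^ 2 := by
    rw [← exp_nat_mul]
    ring_nf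
  calc √(∑ α, ‖f α t‖ ^ 2)
      ≤ √((∑ α, ‖f α 0‖ ^ 2) * exp (-(2 * (m * Fintype.card ι)) * t)) :=
        sqrt_le_sqrt (hf.sum_norm_sq_le ha hm h0 t ht)
    _ = √(∑ α, ‖f α 0‖ ^ 2) * exp (-(m * Fintype.card ι) * t) := by
        rw [hexp, sqrt_mul (by positivity), sqrt_sq (exp_nonneg _)]

end SolvesLinearConsensus

theorem sqrt_sum_norm_sq_le_add_div {x v : ι → ℝ → E} {C c : ℝ} (hc : 0 < c)
    (hx : ∀ α, ∀ t ≥ (0 : ℝ), HasDerivAt (x α) (v α t) t)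
    (hv : ∀ t ≥ (0 : ℝ), √(∑ α, ‖v α t‖ ^ 2) ≤ C * exp (-c * t)) :
    ∀ t ≥ (0 : ℝ), √(∑ α, ‖x α t‖ ^ 2) ≤ √(∑ α, ‖x α 0‖ ^ 2) + C / c := by
  have hX : ∀ t ≥ (0 : ℝ), HasDerivAt (fun s => WithLp.toLp 2 fun α => x α s)
      (WithLp.toLp 2 fun α => v α t) t := fun t ht =>
    (PiLp.hasFDerivAt_toLp (𝕜 := ℝ) 2 _).comp_hasDerivAt t (hasDerivAt_pi.2 fun α => hx α t ht)
  simpa only [PiLp.norm_eq_of_L2] using norm_le_add_div_of_norm_deriv_le_mul_exp hc hX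
    (by simpa only [PiLp.norm_eq_of_L2] using hv)

end Consensus

theorem stmt5_general (n d : ℕ) (hn : 1 ≤ n)
    (a : Fin n → Fin n → ℝ) (ha_symm : ∀ α β, a α β = a β α)
    (abar : ℝ) (habar : 0 < abar)
    (hmin : ∀ α β, abar ≤ a α β)
    (T₀ : ℝ)
    (x u : Fin n → ℝ → EuclideanSpace ℝ (Fin d)) (T : Fin n → ℝ → ℝ)
    (hx : ∀ α, ∀ t ≥ (0 : ℝ), HasDerivAt (x α) (u α t) t)
    (hu : ∀ α, ∀ t ≥ (0 : ℝ), HasDerivAt (u α)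
      ((n : ℝ)⁻¹ • ∑ β, a α β • (u β t - u α t)) t)
    (hT : ∀ α, ∀ t ≥ (0 : ℝ), HasDerivAt (fun s => T α s + ‖u α s‖ ^ 2 / 2)
      ((n : ℝ)⁻¹ * ∑ β, a α β *
        ((T β t + ‖u β t‖ ^ 2 / 2) - (T α t + ‖u α t‖ ^ 2 / 2))) t)
    (hu0 : ∑ α, u α 0 = 0)
    (hT0 : (n : ℝ)⁻¹ * ∑ α, (T α 0 + ‖u α 0‖ ^ 2 / 2) = T₀) :
    ∀ t ≥ (0 : ℝ),
      Real.sqrt (∑ α, ‖u α t‖ ^ 2) ≤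
        Real.sqrt (∑ α, ‖u α 0‖ ^ 2) * Real.exp (-abar * t) ∧
      Real.sqrt (∑ α, ‖x α t‖ ^ 2) ≤
        Real.sqrt (∑ α, ‖x α 0‖ ^ 2) + Real.sqrt (∑ α, ‖u α 0‖ ^ 2) / abar ∧
      Real.sqrt (∑ α, (T α t + ‖u α t‖ ^ 2 / 2 - T₀) ^ 2) ≤
        Real.sqrt (∑ α, (T α 0 + ‖u α 0‖ ^ 2 / 2 - T₀) ^ 2) * Real.exp (-abar * t) := by
  have hn₀ : (n : ℝ) ≠ 0 := Nat.cast_ne_zero.2 (Nat.one_le_iff_ne_zero.1 hn)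
  set b : Fin n → Fin n → ℝ := fun α β => (n : ℝ)⁻¹ * a α β
  have hb_symm : ∀ α β, b α β = b β α := fun α β => by simp only [b, ha_symm]
  have hb_min : ∀ α β, (n : ℝ)⁻¹ * abar ≤ b α β := fun α β =>
    mul_le_mul_of_nonneg_left (hmin α β) (by positivity)
  have hrate : (n : ℝ)⁻¹ * abar * Fintype.card (Fin n) = abar := by
    rw [Fintype.card_fin]
    field_simp
  have hU : SolvesLinearConsensus b u := fun α t ht => by
    simpa only [b, smul_sum, smul_smul] using hu α t ht
  have hE : SolvesLinearConsensus b fun α s => T α s + ‖u α s‖ ^ 2 / 2 - T₀ := fun α t ht => by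
    convert (hT α t ht).sub_const T₀ using 1
    simp only [b, smul_eq_mul, mul_sum, mul_assoc, sub_sub_sub_cancel_right]
  have hE0 : ∑ α, (T α 0 + ‖u α 0‖ ^ 2 / 2 - T₀) = 0 := by
    rw [sum_sub_distrib, ← hT0, sum_const, card_univ, Fintype.card_fin, nsmul_eq_mul,
      mul_inv_cancel_left₀ hn₀, sub_self]
  have hV := hU.sqrt_sum_norm_sq_le hb_symm hb_min hu0
  have hEdecay := hE.sqrt_sum_norm_sq_le hb_symm hb_min hE0
  simp only [hrate, Real.norm_eq_abs, sq_abs] at hV hEdecay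
  exact fun t ht => ⟨hV t ht, sqrt_sum_norm_sq_le_add_div habar hx hV t ht, hEdecay t ht⟩

theorem stmt5 (n d : ℕ) (hn : 1 ≤ n)
    (a : Fin n → Fin n → ℝ) (ha_symm : ∀ α β, a α β = a β α)
    (abar : ℝ) (habar : 0 < abar)
    (hmin : ∀ α β, abar ≤ a α β) (hmin' : ∃ α β, a α β = abar)
    (T₀ : ℝ)
    (x u : Fin n → ℝ → EuclideanSpace ℝ (Fin d)) (T : Fin n → ℝ → ℝ)
    (hx : ∀ α, ∀ t ≥ (0 : ℝ), HasDerivAt (x α) (u α t) t)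
    (hu : ∀ α, ∀ t ≥ (0 : ℝ), HasDerivAt (u α)
      ((n : ℝ)⁻¹ • ∑ β, a α β • (u β t - u α t)) t)
    (hT : ∀ α, ∀ t ≥ (0 : ℝ), HasDerivAt (fun s => T α s + ‖u α s‖ ^ 2 / 2)
      ((n : ℝ)⁻¹ * ∑ β, a α β *
        ((T β t + ‖u β t‖ ^ 2 / 2) - (T α t + ‖u α t‖ ^ 2 / 2))) t)
    (hx0 : ∑ α, x α 0 = 0) (hu0 : ∑ α, u α 0 = 0)
    (hT0 : (n : ℝ)⁻¹ * ∑ α, (T α 0 + ‖u α 0‖ ^ 2 / 2) = T₀) :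
    ∀ t ≥ (0 : ℝ),
      Real.sqrt (∑ α, ‖u α t‖ ^ 2) ≤
        Real.sqrt (∑ α, ‖u α 0‖ ^ 2) * Real.exp (-abar * t) ∧
      Real.sqrt (∑ α, ‖x α t‖ ^ 2) ≤
        Real.sqrt (∑ α, ‖x α 0‖ ^ 2) + Real.sqrt (∑ α, ‖u α 0‖ ^ 2) / abar ∧
      Real.sqrt (∑ α, (T α t + ‖u α t‖ ^ 2 / 2 - T₀) ^ 2) ≤
        Real.sqrt (∑ α, (T α 0 + ‖u α 0‖ ^ 2 / 2 - T₀) ^ 2) * Real.exp (-abar * t) :=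
  stmt5_general n d hn a ha_symm abar habar hmin T₀ x u T hx hu hT hu0 hT0
end

section
/- Let n ≥ 1, let 0 < λ ≤ 1/2, and let (x_α, u_α, T_α) be a differentiable solution on [0,∞) of the KB-CS model with metric-dependent weights a_{αβ}(t) = (1 + ‖x_β(t) − x_α(t)‖²)^{−λ}, whose initial data satisfy ∑_α x_α(0) = 0, ∑_α u_α(0) = 0, and (1/n)∑_α (T_α(0) + ½‖u_α(0)‖²) = T₀. Set Λ₀ := (max{1 + 2𝒳(0)², 2𝒱(0)²})^{−λ}. Then for all t ≥ 0: if λ < 1/2, 𝒱(t) ≤ 𝒱(0) exp( −(Λ₀/(1−2λ))((1+t)^{1−2λ} − 1) ) and ℰ(t) ≤ ℰ(0) exp( −(Λ₀/(1−2λ))((1+t)^{1−2λ} − 1) ); if λ = 1/2, 𝒱(t) ≤ 𝒱(0)(1+t)^{−Λ₀} and ℰ(t) ≤ ℰ(0)(1+t)^{−Λ₀}; and in both cases 𝒳(t) ≤ 𝒳(0) + 𝒱(0) ∫₀ᵗ D(s) ds, where D(s) denotes the corresponding decay factor. -/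
/-!
Both the velocities and the shifted total energies `T_α + ‖u_α‖² / 2 - T₀` solve a linear
consensus system `v_α' = (1/n) ∑_β a_{αβ} (v_β - v_α)` with symmetric weights. Hence their sums are
conserved, so vanish, and `∑_α ‖v_α‖²` dissipates: its derivative is
`-(1/n) ∑_{α,β} a_{αβ} ‖v_β - v_α‖²`, which is at most `-2 m ∑_α ‖v_α‖²` when all weights are
at least `m`, because `∑_{α,β} ‖v_β - v_α‖² = 2 n ∑_α ‖v_α‖²` for centred `v`.
With `m = 0` the velocity fluctuation is nonincreasing, so `𝒳(t) ≤ 𝒳(0) + 𝒱(0) t`, and this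
linear growth of the positions bounds the weights below by `Λ₀ (1 + t)^(-2λ)`. Grönwall with the
primitive `ψ` of that rate gives decay by `exp (-ψ) = D`, and integrating `𝒱 ≤ 𝒱(0) D` bounds `𝒳`.
-/

open Finset Real Set MeasureTheory
open scoped RealInnerProductSpace

section ConsensusField

variable {ι F : Type*} [Fintype ι]

noncomputable def consensusField [AddCommGroup F] [Module ℝ F] (A : ι → ι → ℝ) (v : ι → F)
    (α : ι) : F :=
  (Fintype.card ι : ℝ)⁻¹ • ∑ β, A α β • (v β - v α)

lemma sum_consensusField_eq_zero [AddCommGroup F] [Module ℝ F] {A : ι → ι → ℝ}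
    (hA : ∀ α β, A α β = A β α) (v : ι → F) : ∑ α, consensusField A v α = 0 := by
  have h : ∑ α, ∑ β, A α β • (v β - v α) = -∑ α, ∑ β, A α β • (v β - v α) := by
    conv_lhs => rw [sum_comm]
    simp only [← sum_neg_distrib]
    refine sum_congr rfl fun β _ => sum_congr rfl fun α _ => ?_
    rw [hA, ← smul_neg, neg_sub]
  have h2 : (2 : ℝ) • ∑ α, ∑ β, A α β • (v β - v α) = 0 := by
    rw [two_smul]; nth_rewrite 2 [h]; exact add_neg_cancel _
  simp only [consensusField, ← smul_sum, (smul_eq_zero.mp h2).resolve_left two_ne_zero, smul_zero]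

variable [NormedAddCommGroup F] [InnerProductSpace ℝ F]

lemma two_mul_sum_sum_inner_sub {A : ι → ι → ℝ} (hA : ∀ α β, A α β = A β α) (v : ι → F) :
    2 * ∑ α, ∑ β, A α β * ⟪v α, v β - v α⟫ = -∑ α, ∑ β, A α β * ‖v β - v α‖ ^ 2 := by
  have hswap : ∑ α, ∑ β, A α β * ⟪v α, v β - v α⟫ = ∑ α, ∑ β, A α β * ⟪v β, v α - v β⟫ := by
    rw [sum_comm]
    exact sum_congr rfl fun β _ => sum_congr rfl fun α _ => by rw [hA]
  have hpair : ∀ a b : F, ⟪a, b - a⟫ + ⟪b, a - b⟫ = -‖b - a‖ ^ 2 := fun a b => by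
    rw [← neg_sub b a, inner_neg_right, ← sub_eq_add_neg, ← inner_sub_left, ← neg_sub b a,
      inner_neg_left, real_inner_self_eq_norm_sq]
  rw [two_mul]
  nth_rewrite 2 [hswap]
  simp only [← sum_add_distrib, ← sum_neg_distrib, ← mul_add, hpair, mul_neg]

lemma sum_sum_norm_sub_sq_of_sum_eq_zero {v : ι → F} (hv : ∑ α, v α = 0) :
    ∑ α, ∑ β, ‖v β - v α‖ ^ 2 = 2 * Fintype.card ι * ∑ α, ‖v α‖ ^ 2 := by
  have hcross : ∑ α, ∑ β, ⟪v β, v α⟫ = 0 := by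
    simp [← sum_inner, hv]
  simp only [norm_sub_sq_real, sum_add_distrib, sum_sub_distrib, hcross, sum_const, card_univ,
    nsmul_eq_mul, ← mul_sum]
  ring

lemma sum_inner_consensusField_le [Nonempty ι] {A : ι → ι → ℝ} (hA : ∀ α β, A α β = A β α)
    {m : ℝ} (hm : ∀ α β, m ≤ A α β) {v : ι → F} (hv : ∑ α, v α = 0) :
    ∑ α, ⟪v α, consensusField A v α⟫ ≤ -(m * ∑ α, ‖v α‖ ^ 2) := by
  have hn : (0 : ℝ) < Fintype.card ι := Nat.cast_pos.2 Fintype.card_pos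
  have hsum : ∑ α, ⟪v α, consensusField A v α⟫
      = (Fintype.card ι : ℝ)⁻¹ * ∑ α, ∑ β, A α β * ⟪v α, v β - v α⟫ := by
    simp only [consensusField, inner_smul_right, inner_sum, mul_sum]
  have hdiss : m * ∑ α, ∑ β, ‖v β - v α‖ ^ 2 ≤ ∑ α, ∑ β, A α β * ‖v β - v α‖ ^ 2 := by
    simp only [mul_sum]
    gcongr with α _ β _
    exact hm α β
  rw [sum_sum_norm_sub_sq_of_sum_eq_zero hv] at hdiss
  have h2P := two_mul_sum_sum_inner_sub hA v
  calc ∑ α, ⟪v α, consensusField A v α⟫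
      = -((2 * Fintype.card ι : ℝ)⁻¹ * ∑ α, ∑ β, A α β * ‖v β - v α‖ ^ 2) := by
        rw [hsum]; linear_combination (2 * Fintype.card ι : ℝ)⁻¹ * h2P
    _ ≤ -((2 * Fintype.card ι : ℝ)⁻¹ * (m * (2 * Fintype.card ι * ∑ α, ‖v α‖ ^ 2))) := by
        gcongr
    _ = -(m * ∑ α, ‖v α‖ ^ 2) := by field_simp

end ConsensusField

lemma le_mul_exp_sub_of_hasDerivAt_le {f f' φ k : ℝ → ℝ}
    (hf : ∀ t ≥ (0 : ℝ), HasDerivAt f (f' t) t) (hφ : ∀ t ≥ (0 : ℝ), HasDerivAt φ (k t) t)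
    (hle : ∀ t ≥ (0 : ℝ), f' t ≤ -(k t * f t)) :
    ∀ t ≥ (0 : ℝ), f t ≤ f 0 * exp (φ 0 - φ t) := by
  have hg : ∀ t ≥ (0 : ℝ), HasDerivAt (fun s => f s * exp (φ s))
      ((f' t + k t * f t) * exp (φ t)) t := fun t ht =>
    ((hf t ht).mul (hφ t ht).exp).congr_deriv (by ring)
  have hanti : AntitoneOn (fun s => f s * exp (φ s)) (Ici 0) := by
    refine antitoneOn_of_deriv_nonpos (convex_Ici 0)
      (fun s hs => (hg s hs).continuousAt.continuousWithinAt) (fun s hs => ?_) (fun s hs => ?_)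
    all_goals rw [interior_Ici] at hs
    · exact (hg s hs.le).differentiableAt.differentiableWithinAt
    · rw [(hg s hs.le).deriv]
      exact mul_nonpos_of_nonpos_of_nonneg (by linarith [hle s hs.le]) (exp_pos _).le
  intro t ht
  have h : f t * exp (φ t) ≤ f 0 * exp (φ 0) := hanti self_mem_Ici ht ht
  calc f t = f t * exp (φ t) * exp (-φ t) := by
        rw [mul_assoc, ← exp_add, add_neg_cancel, exp_zero, mul_one]
    _ ≤ f 0 * exp (φ 0) * exp (-φ t) := by gcongr
    _ = f 0 * exp (φ 0 - φ t) := by rw [mul_assoc, ← exp_add, sub_eq_add_neg]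

section ConsensusDynamics

variable {ι F : Type*} [Fintype ι]

lemma sum_eq_sum_zero_of_hasDerivAt_consensusField [NormedAddCommGroup F] [NormedSpace ℝ F]
    {A : ℝ → ι → ι → ℝ} (hA : ∀ t α β, A t α β = A t β α) {v : ι → ℝ → F}
    (hv : ∀ α, ∀ t ≥ (0 : ℝ), HasDerivAt (v α) (consensusField (A t) (fun β => v β t) α) t) :
    ∀ t ≥ (0 : ℝ), ∑ α, v α t = ∑ α, v α 0 := by
  have hderiv : ∀ s ≥ (0 : ℝ), HasDerivAt (fun r => ∑ α, v α r) 0 s := fun s hs => by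
    have h := HasDerivAt.fun_sum (u := univ) fun α _ => hv α s hs
    rwa [sum_consensusField_eq_zero (hA s)] at h
  intro t ht
  exact constant_of_has_deriv_right_zero
    (fun s hs => (hderiv s hs.1).continuousAt.continuousWithinAt)
    (fun s hs => (hderiv s hs.1).hasDerivWithinAt) t (right_mem_Icc.2 ht)

lemma sqrt_sum_norm_sq_le_mul_exp_neg [Nonempty ι] [NormedAddCommGroup F]
    [InnerProductSpace ℝ F]
    {A : ℝ → ι → ι → ℝ} (hA : ∀ t α β, A t α β = A t β α) {v : ι → ℝ → F}
    (hv : ∀ α, ∀ t ≥ (0 : ℝ), HasDerivAt (v α) (consensusField (A t) (fun β => v β t) α) t)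
    (hv0 : ∑ α, v α 0 = 0) {m ψ : ℝ → ℝ} (hψ : ∀ t ≥ (0 : ℝ), HasDerivAt ψ (m t) t)
    (hψ0 : ψ 0 = 0) (hm : ∀ t ≥ (0 : ℝ), ∀ α β, m t ≤ A t α β) :
    ∀ t ≥ (0 : ℝ), √(∑ α, ‖v α t‖ ^ 2) ≤ √(∑ α, ‖v α 0‖ ^ 2) * exp (-ψ t) := by
  have hderiv : ∀ t ≥ (0 : ℝ), HasDerivAt (fun s => ∑ α, ‖v α s‖ ^ 2)
      (2 * ∑ α, ⟪v α t, consensusField (A t) (fun β => v β t) α⟫) t := fun t ht => by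
    simpa only [mul_sum] using HasDerivAt.fun_sum fun α _ => (hv α t ht).norm_sq
  have hdiss : ∀ t ≥ (0 : ℝ), 2 * ∑ α, ⟪v α t, consensusField (A t) (fun β => v β t) α⟫
      ≤ -(2 * m t * ∑ α, ‖v α t‖ ^ 2) := fun t ht => by
    have hsum := (sum_eq_sum_zero_of_hasDerivAt_consensusField hA hv t ht).trans hv0
    linarith [sum_inner_consensusField_le (hA t) (hm t ht) hsum]
  intro t ht
  have hsq :=
    le_mul_exp_sub_of_hasDerivAt_le hderiv (fun s hs => (hψ s hs).const_mul 2) hdiss t ht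
  have hexp : exp (2 * ψ 0 - 2 * ψ t) = exp (-ψ t) ^ 2 := by
    rw [hψ0, ← exp_nat_mul]; ring_nf
  beta_reduce at hsq
  rw [hexp] at hsq
  rw [← sqrt_sq (exp_pos (-ψ t)).le, ← sqrt_mul (by positivity)]
  exact sqrt_le_sqrt hsq

end ConsensusDynamics

lemma norm_le_norm_add_integral_of_hasDerivAt {E : Type*} [NormedAddCommGroup E]
    [NormedSpace ℝ E] [CompleteSpace E] {f f' : ℝ → E} {B : ℝ → ℝ} {a b : ℝ} (hab : a ≤ b)
    (hf : ∀ s ∈ Icc a b, HasDerivAt f (f' s) s) (hf' : IntervalIntegrable f' volume a b)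
    (hB : IntervalIntegrable B volume a b) (hfB : ∀ s ∈ Icc a b, ‖f' s‖ ≤ B s) :
    ‖f b‖ ≤ ‖f a‖ + ∫ s in a..b, B s := by
  have hftc : ∫ s in a..b, f' s = f b - f a :=
    intervalIntegral.integral_eq_sub_of_hasDerivAt (by rwa [uIcc_of_le hab]) hf'
  calc ‖f b‖ ≤ ‖f a‖ + ‖f b - f a‖ := norm_le_norm_add_norm_sub' _ _
    _ ≤ ‖f a‖ + ∫ s in a..b, B s := by
      rw [← hftc]
      gcongr
      exact intervalIntegral.norm_integral_le_of_norm_le hab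
        (ae_of_all _ fun s hs => hfB s (Ioc_subset_Icc_self hs)) hB

lemma sqrt_sum_norm_sq_le_add_integral {ι F : Type*} [Fintype ι] [NormedAddCommGroup F]
    [NormedSpace ℝ F] [CompleteSpace F] {x u : ι → ℝ → F} {B : ℝ → ℝ}
    (hx : ∀ α, ∀ t ≥ (0 : ℝ), HasDerivAt (x α) (u α t) t) (hu : ∀ α, ContinuousOn (u α) (Ici 0))
    (hB : ContinuousOn B (Ici 0)) (huB : ∀ t ≥ (0 : ℝ), √(∑ α, ‖u α t‖ ^ 2) ≤ B t) :
    ∀ t ≥ (0 : ℝ), √(∑ α, ‖x α t‖ ^ 2) ≤ √(∑ α, ‖x α 0‖ ^ 2) + ∫ s in (0 : ℝ)..t, B s := by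
  intro t ht
  let L := (PiLp.continuousLinearEquiv 2 ℝ fun _ : ι => F).symm
  have hnorm : ∀ y : ι → F, ‖L y‖ = √(∑ α, ‖y α‖ ^ 2) := fun y => PiLp.norm_eq_of_L2 _
  have hderiv : ∀ s ∈ Icc 0 t, HasDerivAt (fun r => L fun α => x α r) (L fun α => u α s) s :=
    fun s hs => L.hasFDerivAt.comp_hasDerivAt s (hasDerivAt_pi.2 fun α => hx α s hs.1)
  have hcont : ContinuousOn (fun r => L fun α => u α r) (Icc 0 t) :=
    L.continuous.comp_continuousOn (continuousOn_pi.2 fun α => (hu α).mono Icc_subset_Ici_self)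
  simpa only [hnorm] using norm_le_norm_add_integral_of_hasDerivAt ht hderiv
    (hcont.intervalIntegrable_of_Icc ht)
    ((hB.mono Icc_subset_Ici_self).intervalIntegrable_of_Icc ht)
    fun s hs => (hnorm _).trans_le (huB s hs.1)

lemma one_add_le_max_mul_one_add_sq {w X V t : ℝ} (ht : 0 ≤ t) (hw : w ≤ 2 * (X + V * t) ^ 2) :
    1 + w ≤ max (1 + 2 * X ^ 2) (2 * V ^ 2) * (1 + t) ^ 2 := by
  have h1 := le_max_left (1 + 2 * X ^ 2) (2 * V ^ 2)
  have h2 := le_max_right (1 + 2 * X ^ 2) (2 * V ^ 2)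
  nlinarith [mul_nonneg ht (sub_nonneg.2 h1), mul_nonneg (mul_nonneg ht ht) (sub_nonneg.2 h2),
    mul_nonneg ht (sub_nonneg.2 h2), mul_nonneg ht (sq_nonneg (X - V))]

lemma norm_sub_sq_le_two_mul_sum_norm_sq {ι F : Type*} [Fintype ι] [NormedAddCommGroup F]
    (y : ι → F) (α β : ι) : ‖y β - y α‖ ^ 2 ≤ 2 * ∑ γ, ‖y γ‖ ^ 2 := by
  classical
  rcases eq_or_ne β α with rfl | hne
  · rw [sub_self, norm_zero, zero_pow two_ne_zero]; positivity
  · have hpair : ‖y β‖ ^ 2 + ‖y α‖ ^ 2 ≤ ∑ γ, ‖y γ‖ ^ 2 := by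
      rw [← sum_pair (f := fun γ => ‖y γ‖ ^ 2) hne]
      exact sum_le_sum_of_subset_of_nonneg (subset_univ _) fun γ _ _ => by positivity
    nlinarith [norm_sub_le (y β) (y α), norm_nonneg (y β - y α), sq_nonneg (‖y β‖ - ‖y α‖)]

section CommunicationWeight

variable {ι F : Type*} [NormedAddCommGroup F]

noncomputable def commWeight (lam : ℝ) (y : ι → F) (α β : ι) : ℝ :=
  (1 + ‖y β - y α‖ ^ 2) ^ (-lam)

lemma commWeight_comm (lam : ℝ) (y : ι → F) (α β : ι) :
    commWeight lam y α β = commWeight lam y β α := by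
  rw [commWeight, commWeight, norm_sub_rev]

lemma commWeight_nonneg (lam : ℝ) (y : ι → F) (α β : ι) : 0 ≤ commWeight lam y α β :=
  rpow_nonneg (by positivity) _

lemma max_rpow_mul_rpow_le_commWeight [Fintype ι] {y : ι → F} {X V t lam : ℝ} (hlam : 0 ≤ lam)
    (ht : 0 ≤ t)
    (hy : √(∑ γ, ‖y γ‖ ^ 2) ≤ X + V * t) (α β : ι) :
    max (1 + 2 * X ^ 2) (2 * V ^ 2) ^ (-lam) * (1 + t) ^ (-(2 * lam)) ≤ commWeight lam y α β := by
  have hsum : ∑ γ, ‖y γ‖ ^ 2 ≤ (X + V * t) ^ 2 := by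
    rw [← sq_sqrt (by positivity : (0 : ℝ) ≤ ∑ γ, ‖y γ‖ ^ 2)]
    exact pow_le_pow_left₀ (sqrt_nonneg _) hy 2
  have hbase := one_add_le_max_mul_one_add_sq (X := X) (V := V) ht
    ((norm_sub_sq_le_two_mul_sum_norm_sq y α β).trans (by linarith))
  have hM : 0 ≤ max (1 + 2 * X ^ 2) (2 * V ^ 2) := by positivity
  calc max (1 + 2 * X ^ 2) (2 * V ^ 2) ^ (-lam) * (1 + t) ^ (-(2 * lam))
      = (max (1 + 2 * X ^ 2) (2 * V ^ 2) * (1 + t) ^ 2) ^ (-lam) := by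
        rw [mul_rpow hM (by positivity), ← rpow_natCast (1 + t) 2, ← rpow_mul (by linarith)]
        push_cast; ring_nf
    _ ≤ commWeight lam y α β := rpow_le_rpow_of_nonpos (by positivity) hbase (by linarith)

lemma max_rpow_mul_rpow_le_commWeight_of_hasDerivAt [Fintype ι] [Nonempty ι] [InnerProductSpace ℝ F]
    [CompleteSpace F] {lam : ℝ} (hlam : 0 ≤ lam) {x u : ι → ℝ → F}
    (hx : ∀ α, ∀ t ≥ (0 : ℝ), HasDerivAt (x α) (u α t) t)
    (hu : ∀ α, ∀ t ≥ (0 : ℝ),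
      HasDerivAt (u α) (consensusField (commWeight lam fun γ => x γ t) (fun β => u β t) α) t)
    (hu0 : ∑ α, u α 0 = 0) :
    ∀ t ≥ (0 : ℝ), ∀ α β,
      max (1 + 2 * ∑ α, ‖x α 0‖ ^ 2) (2 * ∑ α, ‖u α 0‖ ^ 2) ^ (-lam) * (1 + t) ^ (-(2 * lam)) ≤
        commWeight lam (fun γ => x γ t) α β := by
  have hV : ∀ t ≥ (0 : ℝ), √(∑ α, ‖u α t‖ ^ 2) ≤ √(∑ α, ‖u α 0‖ ^ 2) := fun t ht => by
    simpa using sqrt_sum_norm_sq_le_mul_exp_neg (fun t => commWeight_comm lam _) hu hu0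
      (m := fun _ => 0) (ψ := fun _ => 0) (fun s _ => hasDerivAt_const s 0) rfl
      (fun s _ => commWeight_nonneg lam _) t ht
  have hX := sqrt_sum_norm_sq_le_add_integral hx
    (fun α s hs => (hu α s hs).continuousAt.continuousWithinAt) continuousOn_const hV
  intro t ht α β
  have := max_rpow_mul_rpow_le_commWeight hlam ht
    (V := √(∑ α, ‖u α 0‖ ^ 2)) (by simpa [mul_comm] using hX t ht) α β
  rwa [sq_sqrt (by positivity), sq_sqrt (by positivity)] at this

end CommunicationWeight

noncomputable def decayFactor (lam Λ₀ s : ℝ) : ℝ :=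
  if lam < 1 / 2 then exp (-(Λ₀ / (1 - 2 * lam)) * ((1 + s) ^ (1 - 2 * lam) - 1))
  else (1 + s) ^ (-Λ₀)

lemma exists_decayFactor_eq_exp_neg {lam : ℝ} (hlam : lam ≤ 1 / 2) (Λ₀ : ℝ) :
    ∃ ψ : ℝ → ℝ, ψ 0 = 0 ∧ ∀ t ≥ (0 : ℝ),
      HasDerivAt ψ (Λ₀ * (1 + t) ^ (-(2 * lam))) t ∧ decayFactor lam Λ₀ t = exp (-ψ t) := by
  have hshift : ∀ t : ℝ, HasDerivAt (fun s => 1 + s) 1 t := fun t => (hasDerivAt_id t).const_add 1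
  rcases lt_or_eq_of_le hlam with hlt | rfl
  · have hne : 1 - 2 * lam ≠ 0 := by linarith
    refine ⟨fun s => Λ₀ / (1 - 2 * lam) * ((1 + s) ^ (1 - 2 * lam) - 1), by simp,
      fun t ht => ⟨?_, ?_⟩⟩
    · refine ((((hshift t).rpow_const (p := 1 - 2 * lam) (Or.inl (by linarith))).sub_const
        1).const_mul (Λ₀ / (1 - 2 * lam))).congr_deriv ?_
      rw [one_mul, ← mul_assoc, div_mul_cancel₀ _ hne, sub_sub_cancel_left]
    · simp only [decayFactor, if_pos hlt, neg_mul]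
  · refine ⟨fun s => Λ₀ * log (1 + s), by simp, fun t ht => ⟨?_, ?_⟩⟩
    · refine (((hshift t).log (by linarith)).const_mul Λ₀).congr_deriv ?_
      norm_num [rpow_neg_one]
    · simp only [decayFactor, lt_irrefl, if_false, rpow_def_of_pos (by linarith : (0 : ℝ) < 1 + t)]
      ring_nf
theorem stmt6_general (n d : ℕ) (hn : 1 ≤ n) (lam : ℝ) (hlam0 : 0 < lam) (hlam : lam ≤ 1 / 2)
    (T₀ : ℝ)
    (x u : Fin n → ℝ → EuclideanSpace ℝ (Fin d)) (T : Fin n → ℝ → ℝ)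
    (hx : ∀ α, ∀ t ≥ (0 : ℝ), HasDerivAt (x α) (u α t) t)
    (hu : ∀ α, ∀ t ≥ (0 : ℝ), HasDerivAt (u α)
      ((n : ℝ)⁻¹ • ∑ β, ((1 + ‖x β t - x α t‖ ^ 2) ^ (-lam)) • (u β t - u α t)) t)
    (hT : ∀ α, ∀ t ≥ (0 : ℝ), HasDerivAt (fun s => T α s + ‖u α s‖ ^ 2 / 2)
      ((n : ℝ)⁻¹ * ∑ β, ((1 + ‖x β t - x α t‖ ^ 2) ^ (-lam)) *
        ((T β t + ‖u β t‖ ^ 2 / 2) - (T α t + ‖u α t‖ ^ 2 / 2))) t)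
    (hu0 : ∑ α, u α 0 = 0)
    (hT0 : (n : ℝ)⁻¹ * ∑ α, (T α 0 + ‖u α 0‖ ^ 2 / 2) = T₀)
    (Λ₀ : ℝ)
    (hΛ : Λ₀ = (max (1 + 2 * ∑ α, ‖x α 0‖ ^ 2) (2 * ∑ α, ‖u α 0‖ ^ 2)) ^ (-lam))
    (D : ℝ → ℝ)
    (hD : D = fun s => if lam < 1 / 2 then
        Real.exp (-(Λ₀ / (1 - 2 * lam)) * ((1 + s) ^ (1 - 2 * lam) - 1))
      else (1 + s) ^ (-Λ₀)) :
    ∀ t ≥ (0 : ℝ),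
      (lam < 1 / 2 →
        Real.sqrt (∑ α, ‖u α t‖ ^ 2) ≤ Real.sqrt (∑ α, ‖u α 0‖ ^ 2) *
          Real.exp (-(Λ₀ / (1 - 2 * lam)) * ((1 + t) ^ (1 - 2 * lam) - 1)) ∧
        Real.sqrt (∑ α, (T α t + ‖u α t‖ ^ 2 / 2 - T₀) ^ 2) ≤
          Real.sqrt (∑ α, (T α 0 + ‖u α 0‖ ^ 2 / 2 - T₀) ^ 2) *
            Real.exp (-(Λ₀ / (1 - 2 * lam)) * ((1 + t) ^ (1 - 2 * lam) - 1))) ∧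
      (lam = 1 / 2 →
        Real.sqrt (∑ α, ‖u α t‖ ^ 2) ≤
          Real.sqrt (∑ α, ‖u α 0‖ ^ 2) * (1 + t) ^ (-Λ₀) ∧
        Real.sqrt (∑ α, (T α t + ‖u α t‖ ^ 2 / 2 - T₀) ^ 2) ≤
          Real.sqrt (∑ α, (T α 0 + ‖u α 0‖ ^ 2 / 2 - T₀) ^ 2) * (1 + t) ^ (-Λ₀)) ∧
      Real.sqrt (∑ α, ‖x α t‖ ^ 2) ≤ Real.sqrt (∑ α, ‖x α 0‖ ^ 2) +
        Real.sqrt (∑ α, ‖u α 0‖ ^ 2) * ∫ s in (0 : ℝ)..t, D s := by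
  have : Nonempty (Fin n) := ⟨⟨0, hn⟩⟩
  set A : ℝ → Fin n → Fin n → ℝ := fun t => commWeight lam fun γ => x γ t
  have hA : ∀ t α β, A t α β = A t β α := fun t => commWeight_comm lam _
  have hu' : ∀ α, ∀ t ≥ (0 : ℝ),
      HasDerivAt (u α) (consensusField (A t) (fun β => u β t) α) t := by
    simpa only [consensusField, A, commWeight, Fintype.card_fin] using hu
  set e : Fin n → ℝ → ℝ := fun α s => T α s + ‖u α s‖ ^ 2 / 2 - T₀
  have he : ∀ α, ∀ t ≥ (0 : ℝ), HasDerivAt (e α) (consensusField (A t) (fun β => e β t) α) t :=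
    fun α t ht => ((hT α t ht).sub_const T₀).congr_deriv (by
      simp only [consensusField, Fintype.card_fin, smul_eq_mul, A, commWeight, e,
        sub_sub_sub_cancel_right])
  have he0 : ∑ α, e α 0 = 0 := by
    simp only [e, sum_sub_distrib, sum_const, card_univ, Fintype.card_fin, nsmul_eq_mul, ← hT0,
      mul_inv_cancel_left₀ (by positivity : (n : ℝ) ≠ 0), sub_self]
  have hm : ∀ t ≥ (0 : ℝ), ∀ α β, Λ₀ * (1 + t) ^ (-(2 * lam)) ≤ A t α β :=
    hΛ ▸ max_rpow_mul_rpow_le_commWeight_of_hasDerivAt hlam0.le hx hu' hu0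
  obtain ⟨ψ, hψ0, hψ⟩ := exists_decayFactor_eq_exp_neg hlam Λ₀
  have hDψ : ∀ t ≥ (0 : ℝ), D t = exp (-ψ t) := fun t ht => hD ▸ (hψ t ht).2
  have hV : ∀ t ≥ (0 : ℝ), √(∑ α, ‖u α t‖ ^ 2) ≤ √(∑ α, ‖u α 0‖ ^ 2) * D t := fun t ht =>
    hDψ t ht ▸ sqrt_sum_norm_sq_le_mul_exp_neg hA hu' hu0 (fun s hs => (hψ s hs).1) hψ0 hm t ht
  have hE : ∀ t ≥ (0 : ℝ), √(∑ α, e α t ^ 2) ≤ √(∑ α, e α 0 ^ 2) * D t := fun t ht => by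
    simpa only [norm_eq_abs, sq_abs, hDψ t ht] using
      sqrt_sum_norm_sq_le_mul_exp_neg hA he he0 (fun s hs => (hψ s hs).1) hψ0 hm t ht
  have hDcont : ContinuousOn D (Ici 0) :=
    ContinuousOn.congr (fun s hs => (hψ s hs).1.continuousAt.neg.rexp.continuousWithinAt) hDψ
  have hX := sqrt_sum_norm_sq_le_add_integral (B := fun s => √(∑ α, ‖u α 0‖ ^ 2) * D s) hx
    (fun α s hs => (hu' α s hs).continuousAt.continuousWithinAt) (continuousOn_const.mul hDcont) hV
  intro t ht
  refine ⟨fun hc => ?_, fun hc => ?_, ?_⟩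
  · simpa only [hD, if_pos hc] using And.intro (hV t ht) (hE t ht)
  · simpa only [hD, hc, lt_irrefl, if_false] using And.intro (hV t ht) (hE t ht)
  · simpa only [intervalIntegral.integral_const_mul] using hX t ht

theorem stmt6 (n d : ℕ) (hn : 1 ≤ n) (lam : ℝ) (hlam0 : 0 < lam) (hlam : lam ≤ 1 / 2)
    (T₀ : ℝ)
    (x u : Fin n → ℝ → EuclideanSpace ℝ (Fin d)) (T : Fin n → ℝ → ℝ)
    (hx : ∀ α, ∀ t ≥ (0 : ℝ), HasDerivAt (x α) (u α t) t)
    (hu : ∀ α, ∀ t ≥ (0 : ℝ), HasDerivAt (u α)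
      ((n : ℝ)⁻¹ • ∑ β, ((1 + ‖x β t - x α t‖ ^ 2) ^ (-lam)) • (u β t - u α t)) t)
    (hT : ∀ α, ∀ t ≥ (0 : ℝ), HasDerivAt (fun s => T α s + ‖u α s‖ ^ 2 / 2)
      ((n : ℝ)⁻¹ * ∑ β, ((1 + ‖x β t - x α t‖ ^ 2) ^ (-lam)) *
        ((T β t + ‖u β t‖ ^ 2 / 2) - (T α t + ‖u α t‖ ^ 2 / 2))) t)
    (hx0 : ∑ α, x α 0 = 0) (hu0 : ∑ α, u α 0 = 0)
    (hT0 : (n : ℝ)⁻¹ * ∑ α, (T α 0 + ‖u α 0‖ ^ 2 / 2) = T₀)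
    (Λ₀ : ℝ)
    (hΛ : Λ₀ = (max (1 + 2 * ∑ α, ‖x α 0‖ ^ 2) (2 * ∑ α, ‖u α 0‖ ^ 2)) ^ (-lam))
    (D : ℝ → ℝ)
    (hD : D = fun s => if lam < 1 / 2 then
        Real.exp (-(Λ₀ / (1 - 2 * lam)) * ((1 + s) ^ (1 - 2 * lam) - 1))
      else (1 + s) ^ (-Λ₀)) :
    ∀ t ≥ (0 : ℝ),
      (lam < 1 / 2 →
        Real.sqrt (∑ α, ‖u α t‖ ^ 2) ≤ Real.sqrt (∑ α, ‖u α 0‖ ^ 2) *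
          Real.exp (-(Λ₀ / (1 - 2 * lam)) * ((1 + t) ^ (1 - 2 * lam) - 1)) ∧
        Real.sqrt (∑ α, (T α t + ‖u α t‖ ^ 2 / 2 - T₀) ^ 2) ≤
          Real.sqrt (∑ α, (T α 0 + ‖u α 0‖ ^ 2 / 2 - T₀) ^ 2) *
            Real.exp (-(Λ₀ / (1 - 2 * lam)) * ((1 + t) ^ (1 - 2 * lam) - 1))) ∧
      (lam = 1 / 2 →
        Real.sqrt (∑ α, ‖u α t‖ ^ 2) ≤
          Real.sqrt (∑ α, ‖u α 0‖ ^ 2) * (1 + t) ^ (-Λ₀) ∧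
        Real.sqrt (∑ α, (T α t + ‖u α t‖ ^ 2 / 2 - T₀) ^ 2) ≤
          Real.sqrt (∑ α, (T α 0 + ‖u α 0‖ ^ 2 / 2 - T₀) ^ 2) * (1 + t) ^ (-Λ₀)) ∧
      Real.sqrt (∑ α, ‖x α t‖ ^ 2) ≤ Real.sqrt (∑ α, ‖x α 0‖ ^ 2) +
        Real.sqrt (∑ α, ‖u α 0‖ ^ 2) * ∫ s in (0 : ℝ)..t, D s :=
  stmt6_general n d hn lam hlam0 hlam T₀ x u T hx hu hT hu0 hT0 Λ₀ hΛ D hD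
end

section
/- Let n ≥ 1, let T₀ > 0, and let (x_α, u_α, T_α) be a differentiable solution on [0,∞) of the PB-CS model with uniform weights a_{αβ} = 1 for all α, β, with T_α(t) > 0 for all α and t ≥ 0, whose initial data satisfy ∑_α u_α(0) = 0 and (1/n)∑_α (T_α(0) + ½‖u_α(0)‖²) = T₀. Then for all t ≥ 0: (d/dt) 𝒱(t)² = −2 ∑_{α=1}^n (T₀/T_α(t)) ‖u_α(t)‖², and 𝒱(t) ≤ e^{−t/n} 𝒱(0). -/
/-!
Summing the velocity equation and the energy equation over all particles kills the
antisymmetric interaction terms, so total momentum stays `0` and total energy stays `n T₀`.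
With `∑ u_α = 0` the cross terms drop out of `(d/dt) 𝒱² = 2 ∑ ⟨u_α', u_α⟩`, leaving
`−2 ∑ (T₀ / T_α) ‖u_α‖²`. Since every `T_α` is at most the total energy `n T₀`, this is at
most `−(2/n) 𝒱²`, and Grönwall's argument gives `𝒱(t)² ≤ e^{−2t/n} 𝒱(0)²`.
-/

open Finset

theorem sum_sum_sub_eq_zero {ι M : Type*} [Fintype ι] [AddCommGroup M] (f : ι → M) :
    ∑ a, ∑ b, (f a - f b) = 0 := by
  simp only [sum_sub_distrib]
  rw [sum_comm, sub_self]

theorem eq_of_forall_hasDerivAt_zero {E : Type*} [NormedAddCommGroup E] [NormedSpace ℝ E]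
    {f : ℝ → E} (hf : ∀ t ≥ (0 : ℝ), HasDerivAt f 0 t) : ∀ t ≥ (0 : ℝ), f t = f 0 :=
  fun t ht => constant_of_has_deriv_right_zero
    (fun s hs => (hf s hs.1).continuousAt.continuousWithinAt)
    (fun s hs => (hf s hs.1).hasDerivWithinAt) t ⟨ht, le_rfl⟩

theorem le_exp_neg_mul_of_hasDerivAt {F F' : ℝ → ℝ} {c : ℝ}
    (hF : ∀ s ≥ (0 : ℝ), HasDerivAt F (F' s) s) (hF' : ∀ s ≥ (0 : ℝ), F' s ≤ -c * F s) :
    ∀ t ≥ (0 : ℝ), F t ≤ Real.exp (-c * t) * F 0 := by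
  set G : ℝ → ℝ := fun s => Real.exp (c * s) * F s
  have hG : ∀ s ≥ (0 : ℝ), HasDerivAt G (Real.exp (c * s) * (c * F s + F' s)) s := by
    intro s hs
    have he : HasDerivAt (fun s => Real.exp (c * s)) (Real.exp (c * s) * c) s := by
      simpa using ((hasDerivAt_id s).const_mul c).exp
    exact (he.mul (hF s hs)).congr_deriv (by ring)
  have hanti : AntitoneOn G (Set.Ici 0) := by
    refine antitoneOn_of_deriv_nonpos (convex_Ici 0)
      (fun s hs => (hG s hs).continuousAt.continuousWithinAt)
      (fun s hs => (hG s (interior_subset hs)).differentiableAt.differentiableWithinAt)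
      (fun s hs => ?_)
    rw [(hG s (interior_subset hs)).deriv]
    exact mul_nonpos_of_nonneg_of_nonpos (Real.exp_pos _).le
      (by linarith [hF' s (interior_subset hs)])
  intro t ht
  have hGt : G t ≤ G 0 := hanti Set.self_mem_Ici ht ht
  simp only [G, mul_zero, Real.exp_zero, one_mul] at hGt
  calc F t = Real.exp (-c * t) * (Real.exp (c * t) * F t) := by
        rw [← mul_assoc, ← Real.exp_add, neg_mul, neg_add_cancel, Real.exp_zero, one_mul]
    _ ≤ Real.exp (-c * t) * F 0 := mul_le_mul_of_nonneg_left hGt (Real.exp_pos _).le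

theorem sum_le_mul_sum_div_mul {ι : Type*} [Fintype ι] {x a : ι → ℝ} {m b : ℝ}
    (hx : ∀ i, 0 ≤ x i) (ha : ∀ i, 0 < a i) (hab : ∀ i, a i ≤ m * b) :
    ∑ i, x i ≤ m * ∑ i, b / a i * x i := by
  rw [mul_sum]
  refine sum_le_sum fun i _ => ?_
  have h : 1 ≤ m * (b / a i) := by
    rw [← mul_div_assoc, one_le_div (ha i)]
    exact hab i
  nlinarith [hx i]

section PBCS

variable {ι E : Type*} [Fintype ι] [NormedAddCommGroup E]
  {κ : ℝ} {u : ι → ℝ → E} {T : ι → ℝ → ℝ}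

theorem sum_velocity_eq_zero [NormedSpace ℝ E]
    (hu : ∀ α, ∀ t ≥ (0 : ℝ), HasDerivAt (u α)
      (κ • ∑ β, ((T β t)⁻¹ • u β t - (T α t)⁻¹ • u α t)) t)
    (hu0 : ∑ α, u α 0 = 0) : ∀ t ≥ (0 : ℝ), ∑ α, u α t = 0 := by
  refine fun t ht => (eq_of_forall_hasDerivAt_zero (f := fun s => ∑ α, u α s) (fun s hs => ?_) t ht).trans hu0
  convert HasDerivAt.fun_sum fun α (_ : α ∈ univ) => hu α s hs
  rw [← smul_sum, sum_comm, sum_sum_sub_eq_zero, smul_zero]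

theorem sum_energy_eq_sum_energy_zero {c : ℝ}
    (hT : ∀ α, ∀ t ≥ (0 : ℝ), HasDerivAt (fun s => T α s + ‖u α s‖ ^ 2 / 2)
      (c * ∑ β, ((T α t)⁻¹ - (T β t)⁻¹)) t) :
    ∀ t ≥ (0 : ℝ), ∑ α, (T α t + ‖u α t‖ ^ 2 / 2) = ∑ α, (T α 0 + ‖u α 0‖ ^ 2 / 2) := by
  refine eq_of_forall_hasDerivAt_zero fun s hs => ?_
  convert HasDerivAt.fun_sum fun α (_ : α ∈ univ) => hT α s hs
  rw [← mul_sum, sum_sum_sub_eq_zero (fun α => (T α s)⁻¹), mul_zero]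

theorem le_sum_energy {t : ℝ} (hT : ∀ α, 0 ≤ T α t) (α : ι) :
    T α t ≤ ∑ β, (T β t + ‖u β t‖ ^ 2 / 2) :=
  calc T α t ≤ T α t + ‖u α t‖ ^ 2 / 2 := le_add_of_nonneg_right (by positivity)
    _ ≤ ∑ β, (T β t + ‖u β t‖ ^ 2 / 2) := single_le_sum (f := fun β => T β t + ‖u β t‖ ^ 2 / 2)
      (fun β _ => add_nonneg (hT β) (by positivity)) (mem_univ α)

/-- With zero total momentum the cross terms `⟨u α, ∑ β, u β / T β⟩` of `(d/dt) ∑ ‖u α‖²`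
sum to `⟨∑ α, u α, ∑ β, u β / T β⟩ = 0`. -/
theorem hasDerivAt_sum_norm_sq [InnerProductSpace ℝ E] {t : ℝ}
    (hu : ∀ α, HasDerivAt (u α) (κ • ∑ β, ((T β t)⁻¹ • u β t - (T α t)⁻¹ • u α t)) t)
    (hsum : ∑ α, u α t = 0) :
    HasDerivAt (fun s => ∑ α, ‖u α s‖ ^ 2)
      (-2 * ∑ α, (κ * Fintype.card ι / T α t) * ‖u α t‖ ^ 2) t := by
  refine (HasDerivAt.fun_sum fun α (_ : α ∈ univ) => (hu α).norm_sq).congr_deriv ?_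
  have hcross : ∑ α, inner ℝ (u α t) (∑ β, (T β t)⁻¹ • u β t) = 0 := by
    rw [← sum_inner, hsum, inner_zero_left]
  simp only [sum_sub_distrib, sum_const, card_univ, ← Nat.cast_smul_eq_nsmul ℝ, inner_smul_right,
    inner_sub_right, real_inner_self_eq_norm_sq]
  have hsplit : ∀ α, 2 * (κ * (inner ℝ (u α t) (∑ β, (T β t)⁻¹ • u β t)
      - Fintype.card ι * ((T α t)⁻¹ * ‖u α t‖ ^ 2))) = 2 * κ * inner ℝ (u α t)
      (∑ β, (T β t)⁻¹ • u β t) + -2 * (κ * Fintype.card ι / T α t * ‖u α t‖ ^ 2) := by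
    intro α
    ring
  rw [sum_congr rfl fun α _ => hsplit α, sum_add_distrib, ← mul_sum, ← mul_sum, hcross, mul_zero,
    zero_add]

end PBCS

theorem stmt9_general (n d : ℕ) (hn : 1 ≤ n) (T₀ : ℝ)
    (u : Fin n → ℝ → EuclideanSpace ℝ (Fin d)) (T : Fin n → ℝ → ℝ)
    (hTpos : ∀ α, ∀ t ≥ (0 : ℝ), 0 < T α t)
    (hu : ∀ α, ∀ t ≥ (0 : ℝ), HasDerivAt (u α)
      ((T₀ / (n : ℝ)) • ∑ β, ((T β t)⁻¹ • u β t - (T α t)⁻¹ • u α t)) t)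
    (hT : ∀ α, ∀ t ≥ (0 : ℝ), HasDerivAt (fun s => T α s + ‖u α s‖ ^ 2 / 2)
      ((T₀ ^ 2 / (n : ℝ)) * ∑ β, ((T α t)⁻¹ - (T β t)⁻¹)) t)
    (hu0 : ∑ α, u α 0 = 0)
    (hT0 : (n : ℝ)⁻¹ * ∑ α, (T α 0 + ‖u α 0‖ ^ 2 / 2) = T₀) :
    ∀ t ≥ (0 : ℝ),
      HasDerivAt (fun s => ∑ α, ‖u α s‖ ^ 2)
        (-2 * ∑ α, (T₀ / T α t) * ‖u α t‖ ^ 2) t ∧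
      Real.sqrt (∑ α, ‖u α t‖ ^ 2) ≤
        Real.exp (-t / (n : ℝ)) * Real.sqrt (∑ α, ‖u α 0‖ ^ 2) := by
  have hn0 : (n : ℝ) ≠ 0 := Nat.cast_ne_zero.mpr (by omega)
  have hmomentum := sum_velocity_eq_zero hu hu0
  have henergy : ∀ t ≥ (0 : ℝ), ∑ α, (T α t + ‖u α t‖ ^ 2 / 2) = n * T₀ := fun t ht => by
    rw [sum_energy_eq_sum_energy_zero hT t ht, ← hT0, mul_inv_cancel_left₀ hn0]
  have hderiv : ∀ t ≥ (0 : ℝ), HasDerivAt (fun s => ∑ α, ‖u α s‖ ^ 2)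
      (-2 * ∑ α, (T₀ / T α t) * ‖u α t‖ ^ 2) t := fun t ht => by
    simpa only [Fintype.card_fin, div_mul_cancel₀ T₀ hn0] using
      hasDerivAt_sum_norm_sq (fun α => hu α t ht) (hmomentum t ht)
  have hdissipation : ∀ t ≥ (0 : ℝ),
      -2 * ∑ α, (T₀ / T α t) * ‖u α t‖ ^ 2 ≤ -(2 / n) * ∑ α, ‖u α t‖ ^ 2 := fun t ht => by
    have hle := sum_le_mul_sum_div_mul (fun α => sq_nonneg ‖u α t‖) (hTpos · t ht)
      fun α => (le_sum_energy (fun β => (hTpos β t ht).le) α).trans (henergy t ht).le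
    rw [neg_mul, neg_mul, neg_le_neg_iff, div_mul_eq_mul_div, div_le_iff₀ (by positivity)]
    linarith
  intro t ht
  refine ⟨hderiv t ht, ?_⟩
  calc √(∑ α, ‖u α t‖ ^ 2) ≤ √(Real.exp (-(2 / n) * t) * ∑ α, ‖u α 0‖ ^ 2) :=
        Real.sqrt_le_sqrt (le_exp_neg_mul_of_hasDerivAt hderiv hdissipation t ht)
    _ = Real.exp (-t / n) * √(∑ α, ‖u α 0‖ ^ 2) := by
        rw [Real.sqrt_mul (Real.exp_pos _).le, ← Real.exp_half]
        ring_nf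

theorem stmt9 (n d : ℕ) (hn : 1 ≤ n) (T₀ : ℝ) (hT₀ : 0 < T₀)
    (x u : Fin n → ℝ → EuclideanSpace ℝ (Fin d)) (T : Fin n → ℝ → ℝ)
    (hTpos : ∀ α, ∀ t ≥ (0 : ℝ), 0 < T α t)
    (hx : ∀ α, ∀ t ≥ (0 : ℝ), HasDerivAt (x α) (u α t) t)
    (hu : ∀ α, ∀ t ≥ (0 : ℝ), HasDerivAt (u α)
      ((T₀ / (n : ℝ)) • ∑ β, ((T β t)⁻¹ • u β t - (T α t)⁻¹ • u α t)) t)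
    (hT : ∀ α, ∀ t ≥ (0 : ℝ), HasDerivAt (fun s => T α s + ‖u α s‖ ^ 2 / 2)
      ((T₀ ^ 2 / (n : ℝ)) * ∑ β, ((T α t)⁻¹ - (T β t)⁻¹)) t)
    (hu0 : ∑ α, u α 0 = 0)
    (hT0 : (n : ℝ)⁻¹ * ∑ α, (T α 0 + ‖u α 0‖ ^ 2 / 2) = T₀) :
    ∀ t ≥ (0 : ℝ),
      HasDerivAt (fun s => ∑ α, ‖u α s‖ ^ 2)
        (-2 * ∑ α, (T₀ / T α t) * ‖u α t‖ ^ 2) t ∧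
      Real.sqrt (∑ α, ‖u α t‖ ^ 2) ≤
        Real.exp (-t / (n : ℝ)) * Real.sqrt (∑ α, ‖u α 0‖ ^ 2) :=
  stmt9_general n d hn T₀ u T hTpos hu hT hu0 hT0
end

section
/- Let n ≥ 1, let (a_{αβ})_{α,β=1}^n be a symmetric matrix of real numbers, and let (x_α, u_α, T_α) be a differentiable solution of the KB-CS model with T_α(t) > 0 for all α and t. Then the total entropy S(t) := ∑_{α=1}^n ln T_α(t) satisfies, for all t, (d/dt) S(t) = (1/(2n)) ∑_{α,β=1}^n (a_{αβ}/(T_α T_β)) [ (T_α + T_β) ‖u_β − u_α‖²/2 + (T_β − T_α)² ]. In particular S is nondecreasing when all a_{αβ} ≥ 0. -/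
/-!
Subtracting the kinetic energy from the energy equation gives
`T_α' = (1/n) ∑_β a_{αβ} ((T_β - T_α) + ‖u_β - u_α‖² / 2)`, the velocity alignment turning
`⟪u_α, u_α'⟫` into the relative kinetic energy. Dividing by `T_α`, summing over `α` and
symmetrizing in `(α, β)` (using `a_{αβ} = a_{βα}`) yields the entropy production formula, whose
summands are nonnegative once the weights are.
-/

open Finset RealInnerProductSpace

section InnerProductSpace

variable {E : Type*} [NormedAddCommGroup E] [InnerProductSpace ℝ E]

theorem HasDerivAt.of_add_half_norm_sq {T : ℝ → ℝ} {u : ℝ → E} {e t : ℝ} {u' : E}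
    (hT : HasDerivAt (fun s => T s + ‖u s‖ ^ 2 / 2) e t) (hu : HasDerivAt u u' t) :
    HasDerivAt T (e - ⟪u t, u'⟫) t := by
  have h := hT.fun_sub (hu.norm_sq.div_const 2)
  simp only [add_sub_cancel_right] at h
  exact h.congr_deriv (by ring)

theorem half_norm_sq_sub_half_norm_sq_sub_inner (v w : E) :
    ‖v‖ ^ 2 / 2 - ‖w‖ ^ 2 / 2 - ⟪w, v - w⟫ = ‖v - w‖ ^ 2 / 2 := by
  rw [norm_sub_sq_real, inner_sub_right, real_inner_self_eq_norm_sq, real_inner_comm]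
  ring

theorem hasDerivAt_temperature_of_energy {ι : Type*} [Fintype ι] (c : ℝ) (a : ι → ι → ℝ)
    (u : ι → ℝ → E) (T : ι → ℝ → ℝ) (α : ι) (t : ℝ)
    (hu : HasDerivAt (u α) (c • ∑ β, a α β • (u β t - u α t)) t)
    (hT : HasDerivAt (fun s => T α s + ‖u α s‖ ^ 2 / 2)
      (c * ∑ β, a α β * ((T β t + ‖u β t‖ ^ 2 / 2) - (T α t + ‖u α t‖ ^ 2 / 2))) t) :
    HasDerivAt (T α) (c * ∑ β, a α β * ((T β t - T α t) + ‖u β t - u α t‖ ^ 2 / 2)) t := by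
  convert hT.of_add_half_norm_sq hu using 1
  simp only [inner_smul_right, inner_sum, ← mul_sub, ← sum_sub_distrib]
  congr 1
  refine sum_congr rfl fun β _ => ?_
  rw [← half_norm_sq_sub_half_norm_sq_sub_inner]
  ring

end InnerProductSpace

theorem sum_sum_add_swap {ι M : Type*} [Fintype ι] [AddCommMonoid M] (f : ι → ι → M) :
    ∑ α, ∑ β, (f α β + f β α) = 2 • ∑ α, ∑ β, f α β := by
  simp only [sum_add_distrib, two_nsmul]
  rw [sum_comm (f := fun α β => f β α)]

theorem sum_mul_sum_div_eq_half_sum_sum {ι : Type*} [Fintype ι] (c : ℝ) (a q : ι → ι → ℝ)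
    (ha : ∀ α β, a α β = a β α) (hq : ∀ α β, q α β = q β α) (T : ι → ℝ) (hT : ∀ α, T α ≠ 0) :
    ∑ α, c * (∑ β, a α β * ((T β - T α) + q α β)) / T α
      = c / 2 * ∑ α, ∑ β, a α β / (T α * T β) * ((T α + T β) * q α β + (T β - T α) ^ 2) := by
  set f : ι → ι → ℝ := fun α β => a α β * ((T β - T α) + q α β) / T α
  have hpair : ∀ α β, f α β + f β α
      = a α β / (T α * T β) * ((T α + T β) * q α β + (T β - T α) ^ 2) := by
    intro α β
    simp only [f, ha β α, hq β α]
    field_simp [hT α, hT β]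
    ring
  have hsum : ∑ α, c * (∑ β, a α β * ((T β - T α) + q α β)) / T α = c * ∑ α, ∑ β, f α β := by
    simp only [f, mul_sum, sum_div, mul_div_assoc]
  rw [hsum, ← sum_congr rfl fun α _ => sum_congr rfl fun β _ => hpair α β, sum_sum_add_swap,
    nsmul_eq_mul]
  ring

theorem stmt10_general (n d : ℕ)
    (a : Fin n → Fin n → ℝ) (ha_symm : ∀ α β, a α β = a β α)
    (u : Fin n → ℝ → EuclideanSpace ℝ (Fin d)) (T : Fin n → ℝ → ℝ)
    (hTpos : ∀ α t, 0 < T α t)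
    (hu : ∀ α t, HasDerivAt (u α)
      ((n : ℝ)⁻¹ • ∑ β, a α β • (u β t - u α t)) t)
    (hT : ∀ α t, HasDerivAt (fun s => T α s + ‖u α s‖ ^ 2 / 2)
      ((n : ℝ)⁻¹ * ∑ β, a α β *
        ((T β t + ‖u β t‖ ^ 2 / 2) - (T α t + ‖u α t‖ ^ 2 / 2))) t) :
    (∀ t, HasDerivAt (fun s => ∑ α, Real.log (T α s))
      ((1 / (2 * n) : ℝ) * ∑ α, ∑ β, a α β / (T α t * T β t) *
        ((T α t + T β t) * ‖u β t - u α t‖ ^ 2 / 2 + (T β t - T α t) ^ 2)) t) ∧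
    ((∀ α β, 0 ≤ a α β) → Monotone (fun t => ∑ α, Real.log (T α t))) := by
  have hS : ∀ t, HasDerivAt (fun s => ∑ α, Real.log (T α s))
      ((1 / (2 * n) : ℝ) * ∑ α, ∑ β, a α β / (T α t * T β t) *
        ((T α t + T β t) * ‖u β t - u α t‖ ^ 2 / 2 + (T β t - T α t) ^ 2)) t := by
    intro t
    have hlog := HasDerivAt.fun_sum (u := univ) fun α _ =>
      (hasDerivAt_temperature_of_energy _ a u T α t (hu α t) (hT α t)).log (hTpos α t).ne'
    refine hlog.congr_deriv ?_
    rw [sum_mul_sum_div_eq_half_sum_sum _ a (fun α β => ‖u β t - u α t‖ ^ 2 / 2) ha_symm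
      (fun α β => by rw [norm_sub_rev]) (T · t) (fun α => (hTpos α t).ne')]
    simp only [mul_div_assoc]
    ring
  refine ⟨hS, fun ha => monotone_of_hasDerivAt_nonneg hS fun t => ?_⟩
  refine mul_nonneg (by positivity) (sum_nonneg fun α _ => sum_nonneg fun β _ => ?_)
  have := hTpos α t; have := hTpos β t; have := ha α β
  positivity

theorem stmt10 (n d : ℕ) (hn : 1 ≤ n)
    (a : Fin n → Fin n → ℝ) (ha_symm : ∀ α β, a α β = a β α)
    (x u : Fin n → ℝ → EuclideanSpace ℝ (Fin d)) (T : Fin n → ℝ → ℝ)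
    (hTpos : ∀ α t, 0 < T α t)
    (hx : ∀ α t, HasDerivAt (x α) (u α t) t)
    (hu : ∀ α t, HasDerivAt (u α)
      ((n : ℝ)⁻¹ • ∑ β, a α β • (u β t - u α t)) t)
    (hT : ∀ α t, HasDerivAt (fun s => T α s + ‖u α s‖ ^ 2 / 2)
      ((n : ℝ)⁻¹ * ∑ β, a α β *
        ((T β t + ‖u β t‖ ^ 2 / 2) - (T α t + ‖u α t‖ ^ 2 / 2))) t) :
    (∀ t, HasDerivAt (fun s => ∑ α, Real.log (T α s))
      ((1 / (2 * n) : ℝ) * ∑ α, ∑ β, a α β / (T α t * T β t) *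
        ((T α t + T β t) * ‖u β t - u α t‖ ^ 2 / 2 + (T β t - T α t) ^ 2)) t) ∧
    ((∀ α β, 0 ≤ a α β) → Monotone (fun t => ∑ α, Real.log (T α t))) :=
  stmt10_general n d a ha_symm u T hTpos hu hT
end

section
/- Let n ≥ 1, let T₀ > 0, let (a_{αβ})_{α,β=1}^n be a symmetric matrix of real numbers, and let (x_α, u_α, T_α) be a differentiable solution of the PB-CS model with T_α(t) > 0 for all α and t. Then the total entropy S(t) := ∑_{α=1}^n ln T_α(t) satisfies, for all t, (d/dt) S(t) = (T₀/(2n)) ∑_{α,β=1}^n a_{αβ} [ ‖u_β/T_β − u_α/T_α‖² + T₀ (1/T_α − 1/T_β)² ]. In particular S is nondecreasing when all a_{αβ} ≥ 0. -/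
/-!
Write `θ_α = 1/T_α` and `w_α = u_α/T_α`. Subtracting the kinetic part `⟪u_α, u_α'⟫` from the
energy law gives `T_α'`, so `S' = ∑ T_α'/T_α` is a double sum `∑ a_{αβ} f_{αβ}` with
`f_{αβ} = (T₀²/n) θ_α (θ_α - θ_β) - (T₀/n) ⟪w_β - w_α, w_α⟫`. Since `a` is symmetric, the double
sum only sees `(f_{αβ} + f_{βα})/2`, and that symmetrization turns both terms into squares.
-/

open RealInnerProductSpace

theorem sum_sum_mul_eq_sum_sum_mul_half_add_swap {ι : Type*} [Fintype ι]
    (a : ι → ι → ℝ) (ha : ∀ i j, a i j = a j i) (f : ι → ι → ℝ) :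
    ∑ i, ∑ j, a i j * f i j = ∑ i, ∑ j, a i j * ((f i j + f j i) / 2) := by
  have hswap : ∑ i, ∑ j, a i j * f j i = ∑ i, ∑ j, a i j * f i j := by
    rw [Finset.sum_comm]
    simp only [ha]
  simp only [mul_div, mul_add, add_div, Finset.sum_add_distrib, ← Finset.sum_div, hswap]
  ring

theorem HasDerivAt.of_add_norm_sq_div_two {E : Type*} [NormedAddCommGroup E]
    [InnerProductSpace ℝ E] {T : ℝ → ℝ} {u : ℝ → E} {e t : ℝ} {v : E}
    (hE : HasDerivAt (fun s => T s + ‖u s‖ ^ 2 / 2) e t) (hu : HasDerivAt u v t) :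
    HasDerivAt T (e - ⟪v, u t⟫) t := by
  have hK : HasDerivAt (fun s => ‖u s‖ ^ 2 / 2) ⟪v, u t⟫ t :=
    (hu.norm_sq.div_const 2).congr_deriv (by rw [real_inner_comm]; ring)
  simpa only [add_sub_cancel_right] using hE.fun_sub hK

theorem inner_sub_self_add_inner_sub_self {E : Type*} [NormedAddCommGroup E]
    [InnerProductSpace ℝ E] (x y : E) : ⟪y - x, x⟫ + ⟪x - y, y⟫ = -‖y - x‖ ^ 2 := by
  rw [norm_sub_sq_real]
  simp only [inner_sub_left, real_inner_self_eq_norm_sq, real_inner_comm x y]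
  ring

theorem sum_entropy_production_eq {ι E : Type*} [Fintype ι] [NormedAddCommGroup E]
    [InnerProductSpace ℝ E] (a : ι → ι → ℝ) (ha : ∀ i j, a i j = a j i) (c K : ℝ)
    (T : ι → ℝ) (u : ι → E) :
    ∑ α, (K * ∑ β, a α β * ((T α)⁻¹ - (T β)⁻¹)
        - ⟪c • ∑ β, a α β • ((T β)⁻¹ • u β - (T α)⁻¹ • u α), u α⟫) / T α
      = ∑ α, ∑ β, a α β *
          ((c * ‖(T β)⁻¹ • u β - (T α)⁻¹ • u α‖ ^ 2 + K * ((T α)⁻¹ - (T β)⁻¹) ^ 2) / 2) := by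
  have hsplit : ∀ α, (K * ∑ β, a α β * ((T α)⁻¹ - (T β)⁻¹)
        - ⟪c • ∑ β, a α β • ((T β)⁻¹ • u β - (T α)⁻¹ • u α), u α⟫) / T α
      = ∑ β, a α β * (K * (T α)⁻¹ * ((T α)⁻¹ - (T β)⁻¹)
          - c * ⟪(T β)⁻¹ • u β - (T α)⁻¹ • u α, (T α)⁻¹ • u α⟫) := by
    intro α
    simp only [real_inner_smul_left, real_inner_smul_right, sum_inner, Finset.mul_sum,
      div_eq_mul_inv, Finset.sum_mul, ← Finset.sum_sub_distrib]
    exact Finset.sum_congr rfl fun β _ => by ring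
  simp only [hsplit]
  rw [sum_sum_mul_eq_sum_sum_mul_half_add_swap a ha]
  refine Finset.sum_congr rfl fun α _ => Finset.sum_congr rfl fun β _ => ?_
  linear_combination (-(a α β * c) / 2) *
    inner_sub_self_add_inner_sub_self ((T α)⁻¹ • u α) ((T β)⁻¹ • u β)

theorem stmt11_general (n d : ℕ) (T₀ : ℝ) (hT₀ : 0 < T₀)
    (a : Fin n → Fin n → ℝ) (ha_symm : ∀ α β, a α β = a β α)
    (u : Fin n → ℝ → EuclideanSpace ℝ (Fin d)) (T : Fin n → ℝ → ℝ)
    (hTpos : ∀ α t, 0 < T α t)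
    (hu : ∀ α t, HasDerivAt (u α)
      ((T₀ / (n : ℝ)) • ∑ β, a α β • ((T β t)⁻¹ • u β t - (T α t)⁻¹ • u α t)) t)
    (hT : ∀ α t, HasDerivAt (fun s => T α s + ‖u α s‖ ^ 2 / 2)
      ((T₀ ^ 2 / (n : ℝ)) * ∑ β, a α β * ((T α t)⁻¹ - (T β t)⁻¹)) t) :
    (∀ t, HasDerivAt (fun s => ∑ α, Real.log (T α s))
      ((T₀ / (2 * n) : ℝ) * ∑ α, ∑ β, a α β *
        (‖(T β t)⁻¹ • u β t - (T α t)⁻¹ • u α t‖ ^ 2 +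
          T₀ * ((T α t)⁻¹ - (T β t)⁻¹) ^ 2)) t) ∧
    ((∀ α β, 0 ≤ a α β) → Monotone (fun t => ∑ α, Real.log (T α t))) := by
  have hS : ∀ t, HasDerivAt (fun s => ∑ α, Real.log (T α s))
      ((T₀ / (2 * n) : ℝ) * ∑ α, ∑ β, a α β *
        (‖(T β t)⁻¹ • u β t - (T α t)⁻¹ • u α t‖ ^ 2 +
          T₀ * ((T α t)⁻¹ - (T β t)⁻¹) ^ 2)) t := by
    intro t
    have hlog := HasDerivAt.fun_sum (u := Finset.univ) fun α _ =>
      (((hT α t).of_add_norm_sq_div_two (hu α t)).log (hTpos α t).ne')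
    refine hlog.congr_deriv ?_
    rw [sum_entropy_production_eq a ha_symm, Finset.mul_sum]
    refine Finset.sum_congr rfl fun α _ => ?_
    rw [Finset.mul_sum]
    exact Finset.sum_congr rfl fun β _ => by ring
  refine ⟨hS, fun ha_nonneg => ?_⟩
  refine monotone_of_deriv_nonneg (fun t => (hS t).differentiableAt) fun t => ?_
  rw [(hS t).deriv]
  exact mul_nonneg (by positivity) <| Finset.sum_nonneg fun α _ =>
    Finset.sum_nonneg fun β _ => mul_nonneg (ha_nonneg α β) (by positivity)

theorem stmt11 (n d : ℕ) (hn : 1 ≤ n) (T₀ : ℝ) (hT₀ : 0 < T₀)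
    (a : Fin n → Fin n → ℝ) (ha_symm : ∀ α β, a α β = a β α)
    (x u : Fin n → ℝ → EuclideanSpace ℝ (Fin d)) (T : Fin n → ℝ → ℝ)
    (hTpos : ∀ α t, 0 < T α t)
    (hx : ∀ α t, HasDerivAt (x α) (u α t) t)
    (hu : ∀ α t, HasDerivAt (u α)
      ((T₀ / (n : ℝ)) • ∑ β, a α β • ((T β t)⁻¹ • u β t - (T α t)⁻¹ • u α t)) t)
    (hT : ∀ α t, HasDerivAt (fun s => T α s + ‖u α s‖ ^ 2 / 2)
      ((T₀ ^ 2 / (n : ℝ)) * ∑ β, a α β * ((T α t)⁻¹ - (T β t)⁻¹)) t) :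
    (∀ t, HasDerivAt (fun s => ∑ α, Real.log (T α s))
      ((T₀ / (2 * n) : ℝ) * ∑ α, ∑ β, a α β *
        (‖(T β t)⁻¹ • u β t - (T α t)⁻¹ • u α t‖ ^ 2 +
          T₀ * ((T α t)⁻¹ - (T β t)⁻¹) ^ 2)) t) ∧
    ((∀ α β, 0 ≤ a α β) → Monotone (fun t => ∑ α, Real.log (T α t))) :=
  stmt11_general n d T₀ hT₀ a ha_symm u T hTpos hu hT
end

section
/- Let n ≥ 1, let (a_{αβ})_{α,β=1}^n be a constant symmetric matrix with all entries a_{αβ} > 0, and let (x_α, u_α, T_α) be a differentiable solution of the KB-CS model. Then at every time t: (d/dt) 𝒱(t)² = −(1/n) ∑_{α,β=1}^n a_{αβ} ‖u_β(t) − u_α(t)‖² ≤ 0, with equality if and only if u_α(t) = u_β(t) for all α, β; and (d/dt) ℰ(t)² = −(1/n) ∑_{α,β=1}^n a_{αβ} (E_β(t) − E_α(t))² ≤ 0, with equality if and only if E_α(t) = E_β(t) for all α, β. -/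
/-! Both `𝒱²` and `ℰ²` are `∑ i, ‖v i‖²` for a solution of the linear consensus equation
`v i' = c • ∑ j, a i j • (v j - v i)`: velocities in `ℝ^d`, energy deviations in `ℝ`. Its derivative
`2 c ∑ i, ⟪v i, ∑ j, a i j • (v j - v i)⟫` becomes `-c ∑ i j, a i j ‖v j - v i‖²` after averaging
it with its relabelling `i ↔ j`, which the symmetry of `a` permits; a sum of squares with positive
weights vanishes exactly when every difference does. -/

open RealInnerProductSpace Finset

section WeightedConsensus

variable {ι E : Type*} [Fintype ι] [NormedAddCommGroup E] {a : ι → ι → ℝ}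

theorem sum_weighted_norm_sq_sub_nonneg (ha : ∀ i j, 0 ≤ a i j) (v : ι → E) :
    0 ≤ ∑ i, ∑ j, a i j * ‖v j - v i‖ ^ 2 :=
  sum_nonneg fun i _ => sum_nonneg fun j _ => mul_nonneg (ha i j) (sq_nonneg _)

theorem sum_weighted_norm_sq_sub_eq_zero_iff (ha : ∀ i j, 0 < a i j) (v : ι → E) :
    ∑ i, ∑ j, a i j * ‖v j - v i‖ ^ 2 = 0 ↔ ∀ i j, v i = v j := by
  have hterm : ∀ i j, 0 ≤ a i j * ‖v j - v i‖ ^ 2 := fun i j =>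
    mul_nonneg (ha i j).le (sq_nonneg _)
  rw [sum_eq_zero_iff_of_nonneg fun i _ => sum_nonneg fun j _ => hterm i j]
  simp only [sum_eq_zero_iff_of_nonneg fun j _ => hterm _ j, mem_univ, true_imp_iff,
    mul_eq_zero, (ha _ _).ne', false_or, sq_eq_zero_iff, norm_eq_zero, sub_eq_zero]
  exact ⟨fun h i j => h j i, fun h i j => h j i⟩

variable [InnerProductSpace ℝ E]

theorem two_mul_sum_inner_weighted_sum_sub (ha : ∀ i j, a i j = a j i) (v : ι → E) :
    2 * ∑ i, ⟪v i, ∑ j, a i j • (v j - v i)⟫ = -∑ i, ∑ j, a i j * ‖v j - v i‖ ^ 2 := by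
  have hS : ∑ i, ⟪v i, ∑ j, a i j • (v j - v i)⟫ = ∑ i, ∑ j, a i j * ⟪v i, v j - v i⟫ := by
    simp only [inner_sum, real_inner_smul_right]
  have hswap : ∑ i, ∑ j, a i j * ⟪v i, v j - v i⟫ = ∑ i, ∑ j, a i j * ⟪v j, v i - v j⟫ := by
    rw [sum_comm]
    simp only [ha]
  rw [hS, two_mul]
  nth_rw 2 [hswap]
  rw [← sum_add_distrib, ← sum_neg_distrib]
  refine sum_congr rfl fun i _ => ?_
  rw [← sum_add_distrib, ← sum_neg_distrib]
  refine sum_congr rfl fun j _ => ?_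
  rw [← real_inner_self_eq_norm_sq, ← neg_sub (v j) (v i), inner_neg_right, inner_sub_left]
  ring

theorem hasDerivAt_sum_norm_sq_of_consensus {v : ι → ℝ → E} {c t : ℝ}
    (ha : ∀ i j, a i j = a j i)
    (hv : ∀ i, HasDerivAt (v i) (c • ∑ j, a i j • (v j t - v i t)) t) :
    HasDerivAt (fun s => ∑ i, ‖v i s‖ ^ 2)
      (-(c * ∑ i, ∑ j, a i j * ‖v j t - v i t‖ ^ 2)) t := by
  refine (HasDerivAt.fun_sum fun i _ => (hv i).norm_sq).congr_deriv ?_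
  calc ∑ i, 2 * ⟪v i t, c • ∑ j, a i j • (v j t - v i t)⟫
      = c * (2 * ∑ i, ⟪v i t, ∑ j, a i j • (v j t - v i t)⟫) := by
        rw [mul_sum, mul_sum]
        refine sum_congr rfl fun i _ => ?_
        rw [real_inner_smul_right]
        ring
    _ = -(c * ∑ i, ∑ j, a i j * ‖v j t - v i t‖ ^ 2) := by
        rw [two_mul_sum_inner_weighted_sum_sub ha (v · t), mul_neg]

theorem consensus_sum_norm_sq_dissipation {v : ι → ℝ → E} {c t : ℝ} (hc : 0 < c)
    (ha_symm : ∀ i j, a i j = a j i) (ha_pos : ∀ i j, 0 < a i j)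
    (hv : ∀ i, HasDerivAt (v i) (c • ∑ j, a i j • (v j t - v i t)) t) :
    HasDerivAt (fun s => ∑ i, ‖v i s‖ ^ 2)
        (-(c * ∑ i, ∑ j, a i j * ‖v j t - v i t‖ ^ 2)) t ∧
      -(c * ∑ i, ∑ j, a i j * ‖v j t - v i t‖ ^ 2) ≤ 0 ∧
      (-(c * ∑ i, ∑ j, a i j * ‖v j t - v i t‖ ^ 2) = 0 ↔ ∀ i j, v i t = v j t) := by
  have hS := sum_weighted_norm_sq_sub_nonneg (fun i j => (ha_pos i j).le) (v · t)
  refine ⟨hasDerivAt_sum_norm_sq_of_consensus ha_symm hv, by nlinarith, ?_⟩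
  rw [neg_eq_zero, mul_eq_zero, or_iff_right hc.ne']
  exact sum_weighted_norm_sq_sub_eq_zero_iff ha_pos (v · t)

end WeightedConsensus

theorem stmt12_general (n d : ℕ) (hn : 1 ≤ n) (T₀ : ℝ)
    (a : Fin n → Fin n → ℝ) (ha_symm : ∀ α β, a α β = a β α) (ha_pos : ∀ α β, 0 < a α β)
    (u : Fin n → ℝ → EuclideanSpace ℝ (Fin d)) (T : Fin n → ℝ → ℝ)
    (hu : ∀ α t, HasDerivAt (u α)
      ((n : ℝ)⁻¹ • ∑ β, a α β • (u β t - u α t)) t)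
    (hT : ∀ α t, HasDerivAt (fun s => T α s + ‖u α s‖ ^ 2 / 2)
      ((n : ℝ)⁻¹ * ∑ β, a α β *
        ((T β t + ‖u β t‖ ^ 2 / 2) - (T α t + ‖u α t‖ ^ 2 / 2))) t) :
    ∀ t,
      HasDerivAt (fun s => ∑ α, ‖u α s‖ ^ 2)
        (-((n : ℝ)⁻¹ * ∑ α, ∑ β, a α β * ‖u β t - u α t‖ ^ 2)) t ∧
      -((n : ℝ)⁻¹ * ∑ α, ∑ β, a α β * ‖u β t - u α t‖ ^ 2) ≤ 0 ∧
      (-((n : ℝ)⁻¹ * ∑ α, ∑ β, a α β * ‖u β t - u α t‖ ^ 2) = 0 ↔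
        ∀ α β, u α t = u β t) ∧
      HasDerivAt (fun s => ∑ α, (T α s + ‖u α s‖ ^ 2 / 2 - T₀) ^ 2)
        (-((n : ℝ)⁻¹ * ∑ α, ∑ β, a α β *
          ((T β t + ‖u β t‖ ^ 2 / 2 - T₀) - (T α t + ‖u α t‖ ^ 2 / 2 - T₀)) ^ 2)) t ∧
      -((n : ℝ)⁻¹ * ∑ α, ∑ β, a α β *
          ((T β t + ‖u β t‖ ^ 2 / 2 - T₀) - (T α t + ‖u α t‖ ^ 2 / 2 - T₀)) ^ 2) ≤ 0 ∧
      (-((n : ℝ)⁻¹ * ∑ α, ∑ β, a α β *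
          ((T β t + ‖u β t‖ ^ 2 / 2 - T₀) - (T α t + ‖u α t‖ ^ 2 / 2 - T₀)) ^ 2) = 0 ↔
        ∀ α β, T α t + ‖u α t‖ ^ 2 / 2 - T₀ = T β t + ‖u β t‖ ^ 2 / 2 - T₀) := by
  intro t
  have hc : 0 < (n : ℝ)⁻¹ := inv_pos.2 (by exact_mod_cast hn)
  obtain ⟨hV', hV_nonpos, hV_eq_zero⟩ :=
    consensus_sum_norm_sq_dissipation hc ha_symm ha_pos (hu · t)
  -- `T₀` cancels in the differences, so the `E α` obey the same consensus law, in `ℝ`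
  obtain ⟨hE', hE_nonpos, hE_eq_zero⟩ :=
    consensus_sum_norm_sq_dissipation (v := fun α s => T α s + ‖u α s‖ ^ 2 / 2 - T₀)
      hc ha_symm ha_pos fun α => by
        simpa only [smul_eq_mul, sub_sub_sub_cancel_right] using (hT α t).sub_const T₀
  simp only [Real.norm_eq_abs, sq_abs] at hE' hE_nonpos hE_eq_zero
  exact ⟨hV', hV_nonpos, hV_eq_zero, hE', hE_nonpos, hE_eq_zero⟩

theorem stmt12 (n d : ℕ) (hn : 1 ≤ n) (T₀ : ℝ)
    (a : Fin n → Fin n → ℝ) (ha_symm : ∀ α β, a α β = a β α) (ha_pos : ∀ α β, 0 < a α β)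
    (x u : Fin n → ℝ → EuclideanSpace ℝ (Fin d)) (T : Fin n → ℝ → ℝ)
    (hx : ∀ α t, HasDerivAt (x α) (u α t) t)
    (hu : ∀ α t, HasDerivAt (u α)
      ((n : ℝ)⁻¹ • ∑ β, a α β • (u β t - u α t)) t)
    (hT : ∀ α t, HasDerivAt (fun s => T α s + ‖u α s‖ ^ 2 / 2)
      ((n : ℝ)⁻¹ * ∑ β, a α β *
        ((T β t + ‖u β t‖ ^ 2 / 2) - (T α t + ‖u α t‖ ^ 2 / 2))) t) :
    ∀ t,
      HasDerivAt (fun s => ∑ α, ‖u α s‖ ^ 2)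
        (-((n : ℝ)⁻¹ * ∑ α, ∑ β, a α β * ‖u β t - u α t‖ ^ 2)) t ∧
      -((n : ℝ)⁻¹ * ∑ α, ∑ β, a α β * ‖u β t - u α t‖ ^ 2) ≤ 0 ∧
      (-((n : ℝ)⁻¹ * ∑ α, ∑ β, a α β * ‖u β t - u α t‖ ^ 2) = 0 ↔
        ∀ α β, u α t = u β t) ∧
      HasDerivAt (fun s => ∑ α, (T α s + ‖u α s‖ ^ 2 / 2 - T₀) ^ 2)
        (-((n : ℝ)⁻¹ * ∑ α, ∑ β, a α β *
          ((T β t + ‖u β t‖ ^ 2 / 2 - T₀) - (T α t + ‖u α t‖ ^ 2 / 2 - T₀)) ^ 2)) t ∧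
      -((n : ℝ)⁻¹ * ∑ α, ∑ β, a α β *
          ((T β t + ‖u β t‖ ^ 2 / 2 - T₀) - (T α t + ‖u α t‖ ^ 2 / 2 - T₀)) ^ 2) ≤ 0 ∧
      (-((n : ℝ)⁻¹ * ∑ α, ∑ β, a α β *
          ((T β t + ‖u β t‖ ^ 2 / 2 - T₀) - (T α t + ‖u α t‖ ^ 2 / 2 - T₀)) ^ 2) = 0 ↔
        ∀ α β, T α t + ‖u α t‖ ^ 2 / 2 - T₀ = T β t + ‖u β t‖ ^ 2 / 2 - T₀) :=
  stmt12_general n d hn T₀ a ha_symm ha_pos u T hu hT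
end

section
/- Let n ≥ 1, let T₀ > 0, let (a_{αβ})_{α,β=1}^n be a constant symmetric matrix of real numbers, and let (x_α, u_α, T_α) be a differentiable solution of the PB-CS model with T_α(t) > 0 for all α, t. Then at every time t, (d/dt) ℰ(t)² = (1/n) ∑_{α,β=1}^n a_{αβ} (T₀² / (T_α(t) T_β(t))) (E_α(t) − E_β(t)) (T_β(t) − T_α(t)). -/
open Finset

/-- Swapping the summation indices, under which `a` is invariant and `f i - f j` changes sign,
shows that the `E j` half of the left-hand side is minus its `E i` half. -/
theorem sum_sum_mul_sub_mul_sub_of_symm {ι R : Type*} [Fintype ι] [CommRing R]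
    (a : ι → ι → R) (ha : ∀ i j, a i j = a j i) (E f : ι → R) :
    ∑ i, ∑ j, a i j * (E i - E j) * (f i - f j) =
      2 * ∑ i, E i * ∑ j, a i j * (f i - f j) := by
  have hswap :
      ∑ i, ∑ j, a i j * E j * (f i - f j) = -∑ i, ∑ j, a i j * E i * (f i - f j) := by
    rw [sum_comm]
    simp only [← sum_neg_distrib]
    exact sum_congr rfl fun i _ => sum_congr rfl fun j _ => by rw [ha]; ring
  calc ∑ i, ∑ j, a i j * (E i - E j) * (f i - f j)
      = ∑ i, ∑ j, a i j * E i * (f i - f j) - ∑ i, ∑ j, a i j * E j * (f i - f j) := by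
        simp only [← sum_sub_distrib]
        exact sum_congr rfl fun i _ => sum_congr rfl fun j _ => by ring
    _ = 2 * ∑ i, ∑ j, a i j * E i * (f i - f j) := by rw [hswap]; ring
    _ = 2 * ∑ i, E i * ∑ j, a i j * (f i - f j) := by
        simp only [mul_sum]
        exact sum_congr rfl fun i _ => sum_congr rfl fun j _ => by ring

theorem stmt15_general (n d : ℕ) (T₀ : ℝ)
    (a : Fin n → Fin n → ℝ) (ha_symm : ∀ α β, a α β = a β α)
    (u : Fin n → ℝ → EuclideanSpace ℝ (Fin d)) (T : Fin n → ℝ → ℝ)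
    (hTpos : ∀ α t, 0 < T α t)
    (hT : ∀ α t, HasDerivAt (fun s => T α s + ‖u α s‖ ^ 2 / 2)
      ((T₀ ^ 2 / (n : ℝ)) * ∑ β, a α β * ((T α t)⁻¹ - (T β t)⁻¹)) t) :
    ∀ t, HasDerivAt (fun s => ∑ α, (T α s + ‖u α s‖ ^ 2 / 2 - T₀) ^ 2)
      ((n : ℝ)⁻¹ * ∑ α, ∑ β, a α β * (T₀ ^ 2 / (T α t * T β t)) *
        ((T α t + ‖u α t‖ ^ 2 / 2 - T₀) - (T β t + ‖u β t‖ ^ 2 / 2 - T₀)) *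
        (T β t - T α t)) t := by
  intro t
  set E : Fin n → ℝ := fun α => T α t + ‖u α t‖ ^ 2 / 2 - T₀
  have hterm : ∀ α β,
      a α β * (T₀ ^ 2 / (T α t * T β t)) * (E α - E β) * (T β t - T α t) =
        T₀ ^ 2 * (a α β * (E α - E β) * ((T α t)⁻¹ - (T β t)⁻¹)) := fun α β => by
    field_simp [(hTpos α t).ne', (hTpos β t).ne']
  refine (HasDerivAt.fun_sum fun α _ =>
    ((hT α t).sub_const T₀).fun_pow 2).congr_deriv ?_
  change _ = (n : ℝ)⁻¹ *
    ∑ α, ∑ β, a α β * (T₀ ^ 2 / (T α t * T β t)) * (E α - E β) * (T β t - T α t)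
  simp_rw [hterm, ← mul_sum, sum_sum_mul_sub_mul_sub_of_symm a ha_symm E]
  rw [mul_sum, mul_sum, mul_sum]
  exact sum_congr rfl fun α _ => by ring

theorem stmt15 (n d : ℕ) (hn : 1 ≤ n) (T₀ : ℝ) (hT₀ : 0 < T₀)
    (a : Fin n → Fin n → ℝ) (ha_symm : ∀ α β, a α β = a β α)
    (x u : Fin n → ℝ → EuclideanSpace ℝ (Fin d)) (T : Fin n → ℝ → ℝ)
    (hTpos : ∀ α t, 0 < T α t)
    (hx : ∀ α t, HasDerivAt (x α) (u α t) t)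
    (hu : ∀ α t, HasDerivAt (u α)
      ((T₀ / (n : ℝ)) • ∑ β, a α β • ((T β t)⁻¹ • u β t - (T α t)⁻¹ • u α t)) t)
    (hT : ∀ α t, HasDerivAt (fun s => T α s + ‖u α s‖ ^ 2 / 2)
      ((T₀ ^ 2 / (n : ℝ)) * ∑ β, a α β * ((T α t)⁻¹ - (T β t)⁻¹)) t) :
    ∀ t, HasDerivAt (fun s => ∑ α, (T α s + ‖u α s‖ ^ 2 / 2 - T₀) ^ 2)
      ((n : ℝ)⁻¹ * ∑ α, ∑ β, a α β * (T₀ ^ 2 / (T α t * T β t)) *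
        ((T α t + ‖u α t‖ ^ 2 / 2 - T₀) - (T β t + ‖u β t‖ ^ 2 / 2 - T₀)) *
        (T β t - T α t)) t :=
  stmt15_general n d T₀ a ha_symm u T hTpos hT
end

section
/- Let n ≥ 1, let T₀ > 0, let (a_{αβ})_{α,β=1}^n be a constant symmetric matrix with all entries a_{αβ} > 0, and let (x_α, u_α, T_α) be a differentiable solution of the PB-CS model with T_α(t) > 0 for all α, t. Define the index sets E₊ := {(α,β) ∈ {1,…,n}² : (E_α(0) − E_β(0))(T_β(0) − T_α(0)) > 0} and E₋ := {1,…,n}² \ E₊. If ∑_{(α,β)∈E₊} a_{αβ} (T₀²/(T_α(0) T_β(0))) (E_α(0) − E_β(0))(T_β(0) − T_α(0)) > ∑_{(α,β)∈E₋} a_{αβ} (T₀²/(T_α(0) T_β(0))) (E_β(0) − E_α(0))(T_β(0) − T_α(0)), then (d/dt) ℰ(t)² |_{t=0} > 0. -/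
/-!
With `E_α' = (T₀²/n) ∑_β a_{αβ} (1/T_α - 1/T_β)`, the derivative of `∑ E_α²` is
`2 ∑_α E_α E_α'`. Symmetrizing in `(α, β)`, which is possible since `a` is symmetric, turns it into
`(1/n) ∑_{α,β} a_{αβ} T₀²/(T_α T_β) (E_α - E_β)(T_β - T_α)`; splitting this sum by the sign of
its summands, the hypothesis says exactly that it is positive.
-/

open Finset

theorem two_mul_sum_mul_sum_sub_eq_sum_sum {ι R : Type*} [Fintype ι] [CommRing R]
    (a : ι → ι → R) (ha : ∀ i j, a i j = a j i) (E f : ι → R) :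
    2 * ∑ i, E i * ∑ j, a i j * (f i - f j) = ∑ i, ∑ j, a i j * ((E i - E j) * (f i - f j)) := by
  have hswap : ∑ i, ∑ j, a i j * (E j * (f i - f j)) = -∑ i, E i * ∑ j, a i j * (f i - f j) := by
    rw [sum_comm, ← sum_neg_distrib]
    refine sum_congr rfl fun i _ => ?_
    rw [mul_sum, ← sum_neg_distrib]
    refine sum_congr rfl fun j _ => ?_
    rw [ha]
    ring
  calc 2 * ∑ i, E i * ∑ j, a i j * (f i - f j)
      = ∑ i, E i * ∑ j, a i j * (f i - f j) - ∑ i, ∑ j, a i j * (E j * (f i - f j)) := by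
        rw [hswap]; ring
    _ = ∑ i, ∑ j, a i j * ((E i - E j) * (f i - f j)) := by
        simp only [mul_sum, ← sum_sub_distrib]
        refine sum_congr rfl fun i _ => sum_congr rfl fun j _ => ?_
        ring

theorem sum_two_mul_mul_sum_inv_sub_inv {ι : Type*} [Fintype ι] (a : ι → ι → ℝ)
    (ha : ∀ i j, a i j = a j i) (E T : ι → ℝ) (hT : ∀ i, T i ≠ 0) (k m : ℝ) :
    ∑ i, 2 * E i * (k / m * ∑ j, a i j * ((T i)⁻¹ - (T j)⁻¹)) =
      (∑ p : ι × ι, a p.1 p.2 * (k / (T p.1 * T p.2)) * ((E p.1 - E p.2) * (T p.2 - T p.1))) / m := by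
  have hsym := two_mul_sum_mul_sum_sub_eq_sum_sum a ha E fun i => (T i)⁻¹
  calc ∑ i, 2 * E i * (k / m * ∑ j, a i j * ((T i)⁻¹ - (T j)⁻¹))
      = k / m * (2 * ∑ i, E i * ∑ j, a i j * ((T i)⁻¹ - (T j)⁻¹)) := by
        rw [mul_sum, mul_sum]
        exact sum_congr rfl fun i _ => by ring
    _ = (∑ p : ι × ι, a p.1 p.2 * (k / (T p.1 * T p.2)) * ((E p.1 - E p.2) * (T p.2 - T p.1))) / m := by
        rw [hsym, Fintype.sum_prod_type, mul_sum, sum_div]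
        refine sum_congr rfl fun i _ => ?_
        rw [mul_sum, sum_div]
        refine sum_congr rfl fun j _ => ?_
        rw [inv_sub_inv (hT i) (hT j)]
        ring

theorem hasDerivAt_sum_sq {ι : Type*} (s : Finset ι) {E : ι → ℝ → ℝ} {E' : ι → ℝ} {t : ℝ}
    (h : ∀ i ∈ s, HasDerivAt (E i) (E' i) t) :
    HasDerivAt (fun x => ∑ i ∈ s, E i x ^ 2) (∑ i ∈ s, 2 * E i t * E' i) t :=
  HasDerivAt.fun_sum fun i hi => by simpa using (h i hi).fun_pow 2

theorem sum_pos_of_sum_filter_pos_gt {ι : Type*} (s : Finset ι) (w g : ι → ℝ)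
    (h : ∑ p ∈ s with 0 < g p, w p * g p > ∑ p ∈ s with ¬ 0 < g p, w p * -g p) :
    0 < ∑ p ∈ s, w p * g p := by
  rw [← sum_filter_add_sum_filter_not s (fun p => 0 < g p)]
  simp only [mul_neg, sum_neg_distrib] at h
  linarith

open scoped Classical in
theorem stmt16_general (n d : ℕ) (T₀ : ℝ)
    (a : Fin n → Fin n → ℝ) (ha_symm : ∀ α β, a α β = a β α)
    (u : Fin n → ℝ → EuclideanSpace ℝ (Fin d)) (T : Fin n → ℝ → ℝ)
    (hTpos : ∀ α t, 0 < T α t)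
    (hT : ∀ α t, HasDerivAt (fun s => T α s + ‖u α s‖ ^ 2 / 2)
      ((T₀ ^ 2 / (n : ℝ)) * ∑ β, a α β * ((T α t)⁻¹ - (T β t)⁻¹)) t)
    (hbig :
      ∑ p ∈ Finset.univ.filter (fun p : Fin n × Fin n =>
          0 < ((T p.1 0 + ‖u p.1 0‖ ^ 2 / 2 - T₀) - (T p.2 0 + ‖u p.2 0‖ ^ 2 / 2 - T₀)) *
            (T p.2 0 - T p.1 0)),
        a p.1 p.2 * (T₀ ^ 2 / (T p.1 0 * T p.2 0)) *
          (((T p.1 0 + ‖u p.1 0‖ ^ 2 / 2 - T₀) - (T p.2 0 + ‖u p.2 0‖ ^ 2 / 2 - T₀)) *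
            (T p.2 0 - T p.1 0)) >
      ∑ p ∈ Finset.univ.filter (fun p : Fin n × Fin n =>
          ¬ 0 < ((T p.1 0 + ‖u p.1 0‖ ^ 2 / 2 - T₀) - (T p.2 0 + ‖u p.2 0‖ ^ 2 / 2 - T₀)) *
            (T p.2 0 - T p.1 0)),
        a p.1 p.2 * (T₀ ^ 2 / (T p.1 0 * T p.2 0)) *
          (((T p.2 0 + ‖u p.2 0‖ ^ 2 / 2 - T₀) - (T p.1 0 + ‖u p.1 0‖ ^ 2 / 2 - T₀)) *
            (T p.2 0 - T p.1 0))) :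
    0 < deriv (fun s => ∑ α, (T α s + ‖u α s‖ ^ 2 / 2 - T₀) ^ 2) 0 := by
  set E : Fin n → ℝ := fun α => T α 0 + ‖u α 0‖ ^ 2 / 2 - T₀
  have hderiv : HasDerivAt (fun s => ∑ α, (T α s + ‖u α s‖ ^ 2 / 2 - T₀) ^ 2)
      (∑ α, 2 * E α * (T₀ ^ 2 / n * ∑ β, a α β * ((T α 0)⁻¹ - (T β 0)⁻¹))) 0 :=
    hasDerivAt_sum_sq univ fun α _ => (hT α 0).sub_const T₀
  rw [hderiv.deriv, sum_two_mul_mul_sum_inv_sub_inv a ha_symm E _ fun α => (hTpos α 0).ne']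
  have hS := sum_pos_of_sum_filter_pos_gt univ
    (fun p : Fin n × Fin n => a p.1 p.2 * (T₀ ^ 2 / (T p.1 0 * T p.2 0)))
    (fun p => (E p.1 - E p.2) * (T p.2 0 - T p.1 0)) (by convert hbig using 3; ring)
  obtain ⟨p, -, -⟩ := exists_ne_zero_of_sum_ne_zero hS.ne'
  have hn : (0 : ℝ) < n := by exact_mod_cast p.1.pos
  exact div_pos hS hn

open scoped Classical in
theorem stmt16 (n d : ℕ) (hn : 1 ≤ n) (T₀ : ℝ) (hT₀ : 0 < T₀)
    (a : Fin n → Fin n → ℝ) (ha_symm : ∀ α β, a α β = a β α) (ha_pos : ∀ α β, 0 < a α β)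
    (x u : Fin n → ℝ → EuclideanSpace ℝ (Fin d)) (T : Fin n → ℝ → ℝ)
    (hTpos : ∀ α t, 0 < T α t)
    (hx : ∀ α t, HasDerivAt (x α) (u α t) t)
    (hu : ∀ α t, HasDerivAt (u α)
      ((T₀ / (n : ℝ)) • ∑ β, a α β • ((T β t)⁻¹ • u β t - (T α t)⁻¹ • u α t)) t)
    (hT : ∀ α t, HasDerivAt (fun s => T α s + ‖u α s‖ ^ 2 / 2)
      ((T₀ ^ 2 / (n : ℝ)) * ∑ β, a α β * ((T α t)⁻¹ - (T β t)⁻¹)) t)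
    (hbig :
      ∑ p ∈ Finset.univ.filter (fun p : Fin n × Fin n =>
          0 < ((T p.1 0 + ‖u p.1 0‖ ^ 2 / 2 - T₀) - (T p.2 0 + ‖u p.2 0‖ ^ 2 / 2 - T₀)) *
            (T p.2 0 - T p.1 0)),
        a p.1 p.2 * (T₀ ^ 2 / (T p.1 0 * T p.2 0)) *
          (((T p.1 0 + ‖u p.1 0‖ ^ 2 / 2 - T₀) - (T p.2 0 + ‖u p.2 0‖ ^ 2 / 2 - T₀)) *
            (T p.2 0 - T p.1 0)) >
      ∑ p ∈ Finset.univ.filter (fun p : Fin n × Fin n =>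
          ¬ 0 < ((T p.1 0 + ‖u p.1 0‖ ^ 2 / 2 - T₀) - (T p.2 0 + ‖u p.2 0‖ ^ 2 / 2 - T₀)) *
            (T p.2 0 - T p.1 0)),
        a p.1 p.2 * (T₀ ^ 2 / (T p.1 0 * T p.2 0)) *
          (((T p.2 0 + ‖u p.2 0‖ ^ 2 / 2 - T₀) - (T p.1 0 + ‖u p.1 0‖ ^ 2 / 2 - T₀)) *
            (T p.2 0 - T p.1 0))) :
    0 < deriv (fun s => ∑ α, (T α s + ‖u α s‖ ^ 2 / 2 - T₀) ^ 2) 0 :=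
  stmt16_general n d T₀ a ha_symm u T hTpos hT hbig
end

section
/- Let n = 2, let T₀ > 0, let (a_{αβ})_{α,β=1}^2 be a constant symmetric matrix with nonnegative entries, and let (x_α, u_α, T_α), α ∈ {1,2}, be a differentiable solution of the PB-CS model with T_α(t) > 0 for all α, t, satisfying u_1(t) + u_2(t) = 0 for all t. Then (d/dt) 𝒱(t)² ≤ 0 for all t. -/
/-! With two particles and zero total momentum the velocities are opposite, so each velocity
equation reduces to `u_α' = -(T₀/2) a_{αβ} (1/T_α + 1/T_β) u_α` with `β ≠ α`: every velocity
relaxes towards zero at a nonnegative rate, and `𝒱²` decreases. -/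

open scoped RealInnerProductSpace

open Finset

section

variable {E : Type*} [NormedAddCommGroup E] [InnerProductSpace ℝ E]

theorem hasDerivAt_sum_norm_sq_s17 {ι : Type*} [Fintype ι] {u : ι → ℝ → E} {u' : ι → E} {t : ℝ}
    (hu : ∀ i, HasDerivAt (u i) (u' i) t) :
    HasDerivAt (fun s => ∑ i, ‖u i s‖ ^ 2) (∑ i, 2 * ⟪u i t, u' i⟫) t :=
  HasDerivAt.fun_sum fun i _ => (hu i).norm_sq

theorem sum_inner_interaction_of_add_eq_zero (a : Fin 2 → Fin 2 → ℝ) (w : Fin 2 → ℝ)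
    {v : Fin 2 → E} (hv : v 0 + v 1 = 0) :
    ∑ α, ⟪v α, ∑ β, a α β • (w β • v β - w α • v α)⟫ =
      -((a 0 1 + a 1 0) * (w 0 + w 1) * ‖v 0‖ ^ 2) := by
  have hv₁ : v 1 = -v 0 := eq_neg_of_add_eq_zero_right hv
  simp only [Fin.sum_univ_two, hv₁, smul_neg, inner_add_right, inner_sub_right,
    inner_neg_right, inner_neg_left, inner_smul_right, real_inner_self_eq_norm_sq, norm_neg]
  ring

theorem sum_inner_interaction_nonpos_of_add_eq_zero {a : Fin 2 → Fin 2 → ℝ} {w : Fin 2 → ℝ}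
    (ha : ∀ α β, 0 ≤ a α β) (hw : ∀ α, 0 ≤ w α) {v : Fin 2 → E} (hv : v 0 + v 1 = 0) :
    ∑ α, ⟪v α, ∑ β, a α β • (w β • v β - w α • v α)⟫ ≤ 0 := by
  rw [sum_inner_interaction_of_add_eq_zero a w hv, neg_nonpos]
  have := ha 0 1
  have := ha 1 0
  have := hw 0
  have := hw 1
  positivity

end

theorem stmt17_general (d : ℕ) (T₀ : ℝ) (hT₀ : 0 < T₀)
    (a : Fin 2 → Fin 2 → ℝ) (ha_nonneg : ∀ α β, 0 ≤ a α β)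
    (u : Fin 2 → ℝ → EuclideanSpace ℝ (Fin d)) (T : Fin 2 → ℝ → ℝ)
    (hTpos : ∀ α t, 0 < T α t)
    (hu : ∀ α t, HasDerivAt (u α)
      ((T₀ / (2 : ℝ)) • ∑ β, a α β • ((T β t)⁻¹ • u β t - (T α t)⁻¹ • u α t)) t)
    (hsum : ∀ t, u 0 t + u 1 t = 0) :
    ∀ t, deriv (fun s => ∑ α, ‖u α s‖ ^ 2) t ≤ 0 := by
  intro t
  have hdiss := sum_inner_interaction_nonpos_of_add_eq_zero ha_nonneg
    (fun α => (inv_pos.2 (hTpos α t)).le) (v := fun α => u α t) (hsum t)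
  calc deriv (fun s => ∑ α, ‖u α s‖ ^ 2) t
      = ∑ α, 2 * ⟪u α t, (T₀ / 2) • ∑ β, a α β • ((T β t)⁻¹ • u β t - (T α t)⁻¹ • u α t)⟫ :=
        (hasDerivAt_sum_norm_sq_s17 fun α => hu α t).deriv
    _ = T₀ * ∑ α, ⟪u α t, ∑ β, a α β • ((T β t)⁻¹ • u β t - (T α t)⁻¹ • u α t)⟫ := by
        rw [mul_sum]
        refine sum_congr rfl fun α _ => ?_
        rw [inner_smul_right]
        ring
    _ ≤ 0 := mul_nonpos_of_nonneg_of_nonpos hT₀.le hdiss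

theorem stmt17 (d : ℕ) (T₀ : ℝ) (hT₀ : 0 < T₀)
    (a : Fin 2 → Fin 2 → ℝ) (ha_symm : ∀ α β, a α β = a β α) (ha_nonneg : ∀ α β, 0 ≤ a α β)
    (x u : Fin 2 → ℝ → EuclideanSpace ℝ (Fin d)) (T : Fin 2 → ℝ → ℝ)
    (hTpos : ∀ α t, 0 < T α t)
    (hx : ∀ α t, HasDerivAt (x α) (u α t) t)
    (hu : ∀ α t, HasDerivAt (u α)
      ((T₀ / (2 : ℝ)) • ∑ β, a α β • ((T β t)⁻¹ • u β t - (T α t)⁻¹ • u α t)) t)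
    (hT : ∀ α t, HasDerivAt (fun s => T α s + ‖u α s‖ ^ 2 / 2)
      ((T₀ ^ 2 / (2 : ℝ)) * ∑ β, a α β * ((T α t)⁻¹ - (T β t)⁻¹)) t)
    (hsum : ∀ t, u 0 t + u 1 t = 0) :
    ∀ t, deriv (fun s => ∑ α, ‖u α s‖ ^ 2) t ≤ 0 :=
  stmt17_general d T₀ hT₀ a ha_nonneg u T hTpos hu hsum
end

section
/- Let n ≥ 1, T₀ > 0, let (a_{αβ})_{α,β=1}^n be a constant symmetric matrix with min_{α,β} a_{αβ} = a̲ > 0, and for each α set ã_α := (1/n)∑_{β=1}^n a_{αβ}. Let u^P_α : [0,∞) → ℝ^d together with temperatures T^P_α : [0,∞) → (0,∞) satisfy (u^P_α)' = (T₀/n)∑_β a_{αβ}(u^P_β/T^P_β − u^P_α/T^P_α), and let u^K_α : [0,∞) → ℝ^d satisfy (u^K_α)' = (1/n)∑_β a_{αβ}(u^K_β − u^K_α). Suppose there are constants C₀ > 0 and ε ∈ (0,1) such that for all α and t ≥ 0: ‖u^P_α(t)‖ ≤ C₀ ε e^{−a̲ t}, ‖u^K_α(t)‖ ≤ C₀ ε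 e^{−a̲ t}, and |T^P_α(t) − T₀| ≤ ε T₀. Then there exists C > 0 such that for every α and all t ≥ 0: if a̲ < ã_α, then ‖u^P_α(t) − u^K_α(t)‖ ≤ e^{−ã_α t} ‖u^P_α(0) − u^K_α(0)‖ + C ε (ã_α/(ã_α − a̲)) e^{−a̲ t}; and if a̲ = ã_α, then ‖u^P_α(t) − u^K_α(t)‖ ≤ e^{−ã_α t} ‖u^P_α(0) − u^K_α(0)‖ + C ε a̲ t e^{−a̲ t}. -/
private lemma auxB {n d : ℕ} (a : Fin n → Fin n → ℝ) (A B c : ℝ)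
    (hAle : ∀ α β, a α β ≤ A) (hA : 0 ≤ A) (hB : 0 ≤ B)
    (ha0 : ∀ α β, 0 ≤ a α β)
    (g : Fin n → EuclideanSpace ℝ (Fin d)) (hg : ∀ β, ‖g β‖ ≤ B) (α : Fin n) :
    ‖c • ∑ β, a α β • (g β - g α)‖ ≤ |c| * ((n:ℝ) * (A * (2*B))) := by
  rw [norm_smul, Real.norm_eq_abs]
  apply mul_le_mul_of_nonneg_left _ (abs_nonneg c)
  calc ‖∑ β, a α β • (g β - g α)‖ ≤ ∑ β, ‖a α β • (g β - g α)‖ := norm_sum_le _ _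
    _ ≤ ∑ _β : Fin n, A * (2*B) := by
        apply Finset.sum_le_sum
        intro β _
        rw [norm_smul, Real.norm_eq_abs, abs_of_nonneg (ha0 α β)]
        apply mul_le_mul (hAle α β) _ (norm_nonneg _) hA
        calc ‖g β - g α‖ ≤ ‖g β‖ + ‖g α‖ := norm_sub_le _ _
          _ ≤ B + B := add_le_add (hg β) (hg α)
          _ = 2*B := by ring
    _ = (n:ℝ) * (A * (2*B)) := by
        simp [Finset.sum_const, Finset.card_univ, nsmul_eq_mul]

private lemma auxMVT {d : ℕ} (f f' : ℝ → EuclideanSpace ℝ (Fin d)) (M t : ℝ)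
    (ht : 0 ≤ t)
    (hd : ∀ x ∈ Set.Icc (0:ℝ) t, HasDerivWithinAt f (f' x) (Set.Icc 0 t) x)
    (hb : ∀ x ∈ Set.Icc (0:ℝ) t, ‖f' x‖ ≤ M) :
    ‖f t‖ ≤ ‖f 0‖ + M * t := by
  have hmain := Convex.norm_image_sub_le_of_norm_hasDerivWithin_le hd hb
    (convex_Icc 0 t) (Set.left_mem_Icc.2 ht) (Set.right_mem_Icc.2 ht)
  have hnorm : ‖t - (0:ℝ)‖ = t := by
    rw [sub_zero, Real.norm_eq_abs, abs_of_nonneg ht]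
  rw [hnorm] at hmain
  have h3 := norm_sub_norm_le (f t) (f 0)
  linarith



private lemma auxSmall (abar ε t C₀ K C W0 Wt E : ℝ)
    (habar : 0 < abar) (hε0 : 0 < ε) (hC₀ : 0 < C₀) (ht : 0 ≤ t) (hbt : abar*t ≤ 1)
    (hEdef : E = Real.exp (-abar*t))
    (hC : C = Real.exp 1 * (2*C₀ + K/abar) + 2*C₀ + 1) (hKpos : 0 < K)
    (hw0 : W0 ≤ 2*C₀*ε) (hW0 : 0 ≤ W0) (h1 : Wt ≤ W0 + K*ε*t) :
    Wt ≤ E*W0 + C*ε*abar*t*E := by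
  have hCpos : 0 < C := by
    rw [hC]
    positivity
  have hE1 : 1 - E ≤ abar*t := by
    have := Real.add_one_le_exp (-abar*t)
    rw [hEdef]
    linarith
  have hE2 : Real.exp (-1) ≤ E := by
    rw [hEdef]
    apply Real.exp_le_exp.mpr
    linarith
  have hexp1 : Real.exp 1 * Real.exp (-1) = 1 := by
    rw [← Real.exp_add]
    norm_num
  have habar0 : abar ≠ 0 := ne_of_gt habar
  have hCkey : 2*C₀*abar + K ≤ C * abar * Real.exp (-1) := by
    have hc : C * abar * Real.exp (-1)
        = (Real.exp 1 * Real.exp (-1)) * (2*C₀*abar + K)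
          + (2*C₀+1)*abar*Real.exp (-1) := by
      rw [hC]
      field_simp
      ring
    rw [hexp1] at hc
    have h6 : 0 ≤ (2*C₀+1)*abar*Real.exp (-1) :=
      mul_nonneg (mul_nonneg (by linarith) habar.le) (Real.exp_pos _).le
    linarith
  have hstep : 2*C₀*ε*(abar*t) + K*ε*t ≤ C * ε * abar * t * E := by
    have h4 : ε*t*(2*C₀*abar + K) ≤ ε*t*(C*abar*Real.exp (-1)) :=
      mul_le_mul_of_nonneg_left hCkey (mul_nonneg hε0.le ht)
    have h5 : ε*t*(C*abar*Real.exp (-1)) ≤ ε*t*(C*abar*E) := by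
      apply mul_le_mul_of_nonneg_left _ (mul_nonneg hε0.le ht)
      exact mul_le_mul_of_nonneg_left hE2 (mul_nonneg hCpos.le habar.le)
    nlinarith [h4, h5]
  have hgap : (1-E)*W0 ≤ (abar*t)*(2*C₀*ε) := by
    calc (1-E)*W0 ≤ (abar*t)*W0 := mul_le_mul_of_nonneg_right hE1 hW0
      _ ≤ (abar*t)*(2*C₀*ε) := mul_le_mul_of_nonneg_left hw0 (mul_nonneg habar.le ht)
  calc Wt ≤ W0 + K*ε*t := h1
    _ = E*W0 + (1-E)*W0 + K*ε*t := by ring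
    _ ≤ E*W0 + (abar*t)*(2*C₀*ε) + K*ε*t := by linarith
    _ ≤ E*W0 + C*ε*abar*t*E := by linarith [hstep]

theorem stmt18 (n d : ℕ) (hn : 1 ≤ n) (T₀ : ℝ) (hT₀ : 0 < T₀)
    (a : Fin n → Fin n → ℝ) (ha_symm : ∀ α β, a α β = a β α)
    (abar : ℝ) (habar : 0 < abar)
    (hmin : ∀ α β, abar ≤ a α β) (hmin' : ∃ α β, a α β = abar)
    (uP uK : Fin n → ℝ → EuclideanSpace ℝ (Fin d)) (TP : Fin n → ℝ → ℝ)
    (hTP : ∀ α, ∀ t ≥ (0 : ℝ), 0 < TP α t)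
    (huP : ∀ α, ∀ t ≥ (0 : ℝ), HasDerivAt (uP α)
      ((T₀ / (n : ℝ)) • ∑ β, a α β • ((TP β t)⁻¹ • uP β t - (TP α t)⁻¹ • uP α t)) t)
    (huK : ∀ α, ∀ t ≥ (0 : ℝ), HasDerivAt (uK α)
      ((n : ℝ)⁻¹ • ∑ β, a α β • (uK β t - uK α t)) t)
    (C₀ ε : ℝ) (hC₀ : 0 < C₀) (hε0 : 0 < ε) (hε1 : ε < 1)
    (hPb : ∀ α, ∀ t ≥ (0 : ℝ), ‖uP α t‖ ≤ C₀ * ε * Real.exp (-abar * t))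
    (hKb : ∀ α, ∀ t ≥ (0 : ℝ), ‖uK α t‖ ≤ C₀ * ε * Real.exp (-abar * t))
    (hTb : ∀ α, ∀ t ≥ (0 : ℝ), |TP α t - T₀| ≤ ε * T₀) :
    ∃ C > (0 : ℝ), ∀ α, ∀ t ≥ (0 : ℝ),
      (abar < (n : ℝ)⁻¹ * ∑ β, a α β →
        ‖uP α t - uK α t‖ ≤
          Real.exp (-((n : ℝ)⁻¹ * ∑ β, a α β) * t) * ‖uP α 0 - uK α 0‖ +
          C * ε * (((n : ℝ)⁻¹ * ∑ β, a α β) / ((n : ℝ)⁻¹ * (∑ β, a α β) - abar)) *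
            Real.exp (-abar * t)) ∧
      (abar = (n : ℝ)⁻¹ * ∑ β, a α β →
        ‖uP α t - uK α t‖ ≤
          Real.exp (-((n : ℝ)⁻¹ * ∑ β, a α β) * t) * ‖uP α 0 - uK α 0‖ +
          C * ε * abar * t * Real.exp (-abar * t)) := by
  have hnpos : (0:ℝ) < n := by exact_mod_cast hn
  have hε1' : (0:ℝ) < 1 - ε := by linarith
  set A : ℝ := ∑ α, ∑ β, a α β with hA
  have hapos : ∀ α β, 0 < a α β := fun α β => lt_of_lt_of_le habar (hmin α β)
  have hAle : ∀ α β, a α β ≤ A := by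
    intro α β
    calc a α β ≤ ∑ β', a α β' :=
          Finset.single_le_sum (fun i _ => (hapos α i).le) (Finset.mem_univ β)
      _ ≤ A := Finset.single_le_sum
          (fun i _ => Finset.sum_nonneg fun j _ => (hapos i j).le) (Finset.mem_univ α)
  obtain ⟨α₀, β₀, -⟩ := hmin'
  have hApos : 0 < A := lt_of_lt_of_le (hapos α₀ β₀) (hAle α₀ β₀)
  set K : ℝ := 2*A*C₀*((1-ε)⁻¹ + 1) with hK
  have hKpos : 0 < K := by positivity
  set C : ℝ := Real.exp 1 * (2*C₀ + K/abar) + 2*C₀ + 1 with hC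
  have hCpos : 0 < C := by positivity
  have hC2 : 2*C₀ ≤ C := by
    have h1 : 0 < 2*C₀ + K/abar := by positivity
    have h2 : 0 < Real.exp 1 * (2*C₀ + K/abar) := mul_pos (Real.exp_pos 1) h1
    rw [hC]
    linarith
  -- bound at 0 and trivial bound
  have hexp_le_one : ∀ t ≥ (0:ℝ), Real.exp (-abar*t) ≤ 1 := by
    intro t ht
    have : -abar*t ≤ 0 := by nlinarith
    calc Real.exp (-abar*t) ≤ Real.exp 0 := Real.exp_le_exp.mpr this
      _ = 1 := Real.exp_zero
  have hwt : ∀ α, ∀ t ≥ (0:ℝ), ‖uP α t - uK α t‖ ≤ 2*C₀*ε*Real.exp (-abar*t) := by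
    intro α t ht
    calc ‖uP α t - uK α t‖ ≤ ‖uP α t‖ + ‖uK α t‖ := norm_sub_le _ _
      _ ≤ C₀ * ε * Real.exp (-abar*t) + C₀ * ε * Real.exp (-abar*t) :=
          add_le_add (hPb α t ht) (hKb α t ht)
      _ = 2*C₀*ε*Real.exp (-abar*t) := by ring
  have hw0 : ∀ α, ‖uP α 0 - uK α 0‖ ≤ 2*C₀*ε := by
    intro α
    have := hwt α 0 le_rfl
    simpa using this
  -- the MVT bound
  have hmvt : ∀ α, ∀ t ≥ (0:ℝ), ‖uP α t - uK α t‖ ≤ ‖uP α 0 - uK α 0‖ + K * ε * t := by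
    intro α t ht
    have hbound : ∀ x ∈ Set.Icc (0:ℝ) t,
        ‖(T₀/(n:ℝ)) • ∑ β, a α β • ((TP β x)⁻¹ • uP β x - (TP α x)⁻¹ • uP α x)
          - (n:ℝ)⁻¹ • ∑ β, a α β • (uK β x - uK α x)‖ ≤ K * ε := by
      intro x hx
      have hx0 : (0:ℝ) ≤ x := hx.1
      have hupb : ∀ β, ‖uP β x‖ ≤ C₀*ε := by
        intro β
        refine (hPb β x hx0).trans ?_
        have h := mul_le_mul_of_nonneg_left (hexp_le_one x hx0)
          (by positivity : (0:ℝ) ≤ C₀*ε)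
        nlinarith
      have hukb : ∀ β, ‖uK β x‖ ≤ C₀*ε := by
        intro β
        refine (hKb β x hx0).trans ?_
        have h := mul_le_mul_of_nonneg_left (hexp_le_one x hx0)
          (by positivity : (0:ℝ) ≤ C₀*ε)
        nlinarith
      have hTlow : ∀ β, (1-ε)*T₀ ≤ TP β x := by
        intro β
        have h := abs_le.mp (hTb β x hx0)
        nlinarith [h.1]
      have hg : ∀ β, ‖(TP β x)⁻¹ • uP β x‖ ≤ C₀*ε / ((1-ε)*T₀) := by
        intro β
        rw [norm_smul, Real.norm_eq_abs, abs_inv, abs_of_pos (hTP β x hx0)]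
        have h1 : (0:ℝ) < (1-ε)*T₀ := by positivity
        calc (TP β x)⁻¹ * ‖uP β x‖ ≤ ((1-ε)*T₀)⁻¹ * (C₀*ε) := by
              apply mul_le_mul _ (hupb β) (norm_nonneg _) (by positivity)
              exact inv_anti₀ h1 (hTlow β)
          _ = C₀*ε / ((1-ε)*T₀) := by ring
      have hB1 : (0:ℝ) ≤ C₀*ε / ((1-ε)*T₀) := by positivity
      have hD1 : ‖(T₀/(n:ℝ)) • ∑ β, a α β • ((TP β x)⁻¹ • uP β x - (TP α x)⁻¹ • uP α x)‖
          ≤ |T₀/(n:ℝ)| * ((n:ℝ)*(A*(2*(C₀*ε/((1-ε)*T₀))))) :=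
        auxB a A _ _ hAle hApos.le hB1 (fun α β => (hapos α β).le) _ hg α
      have hD2 : ‖(n:ℝ)⁻¹ • ∑ β, a α β • (uK β x - uK α x)‖
          ≤ |(n:ℝ)⁻¹| * ((n:ℝ)*(A*(2*(C₀*ε)))) :=
        auxB a A _ _ hAle hApos.le (by positivity) (fun α β => (hapos α β).le) _ hukb α
      rw [abs_of_pos (by positivity : (0:ℝ) < T₀/(n:ℝ))] at hD1
      rw [abs_of_pos (by positivity : (0:ℝ) < ((n:ℝ))⁻¹)] at hD2
      have hn0 : (n:ℝ) ≠ 0 := ne_of_gt hnpos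
      have he1 : (T₀/(n:ℝ)) * ((n:ℝ)*(A*(2*(C₀*ε/((1-ε)*T₀))))) = 2*A*C₀*ε*(1-ε)⁻¹ := by
        field_simp
      have he2 : ((n:ℝ))⁻¹ * ((n:ℝ)*(A*(2*(C₀*ε)))) = 2*A*C₀*ε := by
        field_simp
      rw [he1] at hD1
      rw [he2] at hD2
      have htri := norm_sub_le
        ((T₀/(n:ℝ)) • ∑ β, a α β • ((TP β x)⁻¹ • uP β x - (TP α x)⁻¹ • uP α x))
        ((n:ℝ)⁻¹ • ∑ β, a α β • (uK β x - uK α x))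
      have hKe : K*ε = 2*A*C₀*ε*(1-ε)⁻¹ + 2*A*C₀*ε := by rw [hK]; ring
      linarith
    have hderiv : ∀ x ∈ Set.Icc (0:ℝ) t,
        HasDerivWithinAt (fun s => uP α s - uK α s)
          ((fun s => (T₀/(n:ℝ)) • ∑ β, a α β • ((TP β s)⁻¹ • uP β s - (TP α s)⁻¹ • uP α s)
            - (n:ℝ)⁻¹ • ∑ β, a α β • (uK β s - uK α s)) x) (Set.Icc 0 t) x :=
      fun x hx => ((huP α x hx.1).sub (huK α x hx.1)).hasDerivWithinAt
    exact auxMVT (fun s => uP α s - uK α s) _ (K*ε) t ht hderiv hbound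
  -- conclusion
  refine ⟨C, hCpos, fun α t ht => ?_⟩
  set S : ℝ := ∑ β, a α β with hS
  have htil : abar ≤ (n:ℝ)⁻¹ * S := by
    have h1 : (n:ℝ)*abar ≤ S := by
      calc (n:ℝ)*abar = ∑ _β : Fin n, abar := by
            simp [Finset.sum_const, Finset.card_univ, nsmul_eq_mul, mul_comm]
        _ ≤ S := Finset.sum_le_sum fun β _ => hmin α β
    calc abar = (n:ℝ)⁻¹ * ((n:ℝ)*abar) := by field_simp
      _ ≤ (n:ℝ)⁻¹ * S := mul_le_mul_of_nonneg_left h1 (by positivity)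
  have hE : (0:ℝ) < Real.exp (-abar*t) := Real.exp_pos _
  have hF : (0:ℝ) ≤ Real.exp (-((n:ℝ)⁻¹ * S)*t) * ‖uP α 0 - uK α 0‖ :=
    mul_nonneg (Real.exp_pos _).le (norm_nonneg _)
  constructor
  · intro hlt
    have hden : 0 < (n:ℝ)⁻¹ * S - abar := by linarith
    have hr : 1 ≤ ((n:ℝ)⁻¹ * S) / ((n:ℝ)⁻¹ * S - abar) := by
      rw [le_div_iff₀ hden]
      linarith
    have h1 := hwt α t ht
    have hCε : 2*C₀*ε ≤ C*ε := mul_le_mul_of_nonneg_right hC2 hε0.le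
    have h3 : C*ε ≤ C*ε*(((n:ℝ)⁻¹ * S) / ((n:ℝ)⁻¹ * S - abar)) :=
      le_mul_of_one_le_right (mul_nonneg hCpos.le hε0.le) hr
    have h2 : 2*C₀*ε*Real.exp (-abar*t)
        ≤ C * ε * (((n:ℝ)⁻¹ * S) / ((n:ℝ)⁻¹ * S - abar)) * Real.exp (-abar*t) :=
      mul_le_mul_of_nonneg_right (hCε.trans h3) hE.le
    linarith
  · intro heq
    rw [← heq]
    rcases le_total 1 (abar*t) with hbt | hbt
    · -- large time: use trivial bound
      have h1 := hwt α t ht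
      have h5 : C*ε ≤ C*ε*(abar*t) :=
        le_mul_of_one_le_right (mul_nonneg hCpos.le hε0.le) hbt
      have hCε : 2*C₀*ε ≤ C*ε := mul_le_mul_of_nonneg_right hC2 hε0.le
      have h2 : 2*C₀*ε*Real.exp (-abar*t) ≤ C*ε*(abar*t)*Real.exp (-abar*t) :=
        mul_le_mul_of_nonneg_right (hCε.trans h5) hE.le
      have hF' : (0:ℝ) ≤ Real.exp (-abar*t) * ‖uP α 0 - uK α 0‖ :=
        mul_nonneg (Real.exp_pos _).le (norm_nonneg _)
      have heq2 : C*ε*(abar*t)*Real.exp (-abar*t) = C*ε*abar*t*Real.exp (-abar*t) := by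
        ring
      linarith
    · -- small time: use MVT bound
      exact auxSmall abar ε t C₀ K C (‖uP α 0 - uK α 0‖) (‖uP α t - uK α t‖)
        (Real.exp (-abar*t)) habar hε0 hC₀ ht hbt rfl hC hKpos (hw0 α) (norm_nonneg _)
        (hmvt α t ht)
end
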